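/- arXiv:1210.6951 — 5 statements merged into one kernel-verified Lean document; each statement's English description precedes it below -/
import Mathlib

section
/- Let n ≥ 3 and let X be a set of 3-element subsets of Fin n such that every triangle of Fin n admits a ℤ/2-filling contained in X. Let λ ≥ 0 be such that ‖dβ‖²_X ≥ λ·‖β‖² for every coclosed 1-cochain β. Let φ be a map from Fin n to a real inner product space such that Area(φτ) ≥ Fill_X(τ) for every triangle τ of Fin n. Then Σ_{f ∈ X} Area(φf)² ≥ (λ / (3(n−2))) · Σ_τ Fill_X(τ)², where the second sum runs over all triangles τ of Fin n. -/
open Finset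

/-- `y` is a ℤ/2-filling of the triangle `τ`: `y` consists of 3-element subsets, and for
every edge `e` the number of members of `y` containing `e` has the same parity as the
indicator that `e ⊆ τ`. -/
def IsFilling {n : ℕ} (y : Finset (Finset (Fin n))) (τ : Finset (Fin n)) : Prop :=
  (∀ f ∈ y, f.card = 3) ∧
  ∀ e : Finset (Fin n), e.card = 2 →
    (y.filter (fun f => e ⊆ f)).card % 2 = (if e ⊆ τ then 1 else 0)

/-- `Fill_X(τ)`: the minimal cardinality of a ℤ/2-filling of `τ` contained in `X`. -/
noncomputable def fillIn {n : ℕ} (X : Finset (Finset (Fin n))) (τ : Finset (Fin n)) : ℕ :=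
  sInf {m | ∃ y ⊆ X, IsFilling y τ ∧ y.card = m}

/-- The coboundary of a 1-cochain evaluated on a triangle `{u,v,w}` with `u < v < w`. -/
def dOne {n : ℕ} (β : Fin n → Fin n → ℝ) (f : Finset (Fin n)) : ℝ :=
  match f.sort (· ≤ ·) with
  | [u, v, w] => β u v - β u w + β v w
  | _ => 0

/-- `‖β‖² = ∑_{u<v} β(u,v)²`. -/
def normSq {n : ℕ} (β : Fin n → Fin n → ℝ) : ℝ :=
  ∑ u : Fin n, ∑ v ∈ Finset.univ.filter (fun v => u < v), β u v ^ 2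

/-- The area of the affine image of a triangle `τ = {a,b,c}` (with `a < b < c`) under `φ`. -/
noncomputable def triArea {n : ℕ} {H : Type*} [NormedAddCommGroup H] [InnerProductSpace ℝ H]
    (φ : Fin n → H) (τ : Finset (Fin n)) : ℝ :=
  match τ.sort (· ≤ ·) with
  | [a, b, c] =>
      (1/2) * Real.sqrt (‖φ b - φ a‖ ^ 2 * ‖φ c - φ a‖ ^ 2 -
        (inner ℝ (φ b - φ a) (φ c - φ a) : ℝ) ^ 2)
  | _ => 0

/-! Choose coordinates `x i` for the span of `φ`. For each pair `(i, j)` the cochain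
`β (u, v) = x i u * x j v - x j u * x i v` has `dβ f` equal to twice the signed area of the
projection of `φ f` to the `(i, j)`-plane, so by Lagrange's identity the sum over all pairs of
`(dβ f)²` is `8 * Area (φ f)²`. Subtracting a coboundary makes `β` coclosed without changing `dβ`,
so the spectral hypothesis bounds `λ‖β‖²` by `‖dβ‖²_X`; on the other hand Cauchy–Schwarz on each
triangle, together with the fact that every edge lies in `n - 2` triangles, bounds the sum of
`(dβ τ)²` over all triangles by `3(n - 2)‖β‖²`. Summing over `(i, j)` gives
`λ ∑_τ Area² ≤ 3(n - 2) ∑_X Area²`, and `Fill_X τ ≤ Area (φ τ)` finishes the proof. -/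

lemma Finset.eq_triple_of_sort_eq {α : Type*} [LinearOrder α] {f : Finset α} {a b c : α}
    (h : f.sort (· ≤ ·) = [a, b, c]) : a < b ∧ b < c ∧ f = {a, b, c} := by
  have hlt := List.sortedLT_iff_pairwise.mp (f.sortedLT_sort)
  rw [h] at hlt
  simp only [List.pairwise_cons, List.mem_cons, List.not_mem_nil] at hlt
  refine ⟨hlt.1 b (by simp), hlt.2.1 c (by simp), ?_⟩
  rw [← f.sort_toFinset (· ≤ ·), h]
  simp

lemma card_filter_card_eq_three_mem_mem {n : ℕ} {a b : Fin n} (hab : a ≠ b) :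
    #{τ : Finset (Fin n) | τ.card = 3 ∧ a ∈ τ ∧ b ∈ τ} = n - 2 := by
  have himage : ({τ : Finset (Fin n) | τ.card = 3 ∧ a ∈ τ ∧ b ∈ τ} : Finset _) =
      ({a, b}ᶜ : Finset (Fin n)).image (insert · {a, b}) := by
    ext τ
    simp only [mem_filter, mem_univ, true_and, mem_image, mem_compl]
    constructor
    · rintro ⟨h3, ha, hb⟩
      have hsub : {a, b} ⊆ τ := insert_subset ha (singleton_subset_iff.mpr hb)
      obtain ⟨w, hw⟩ := card_eq_one.mp
        (by rw [card_sdiff_of_subset hsub, h3, card_pair hab] : (τ \ {a, b}).card = 1)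
      refine ⟨w, fun hw' => ?_, ?_⟩
      · simpa [hw'] using hw.symm.subset (mem_singleton_self w)
      · rw [insert_eq, ← hw, sdiff_union_of_subset hsub]
    · rintro ⟨w, hw, rfl⟩
      exact ⟨by rw [card_insert_of_notMem hw, card_pair hab], by simp, by simp⟩
  rw [himage, card_image_of_injOn fun w hw w' _ h => (insert_inj (mem_compl.mp hw)).mp h,
    card_compl, card_pair hab, Fintype.card_fin]

lemma normSq_eq_sum_pairs {n : ℕ} (γ : Fin n → Fin n → ℝ) :
    normSq γ = ∑ p : Fin n × Fin n with p.1 < p.2, γ p.1 p.2 ^ 2 := by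
  rw [normSq, sum_filter, Fintype.sum_prod_type]
  simp_rw [sum_filter]

lemma sq_dOne_le {n : ℕ} (γ : Fin n → Fin n → ℝ) (τ : Finset (Fin n)) :
    dOne γ τ ^ 2 ≤ 3 * ∑ p : Fin n × Fin n with p.1 < p.2 ∧ p.1 ∈ τ ∧ p.2 ∈ τ, γ p.1 p.2 ^ 2 := by
  unfold dOne
  split
  case h_1 a b c hsort =>
    obtain ⟨hab, hbc, rfl⟩ := Finset.eq_triple_of_sort_eq hsort
    have hpairs : ({p : Fin n × Fin n | p.1 < p.2 ∧ p.1 ∈ ({a, b, c} : Finset _) ∧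
        p.2 ∈ ({a, b, c} : Finset _)} : Finset _) = {(a, b), (a, c), (b, c)} := by
      ext ⟨u, v⟩
      simp only [mem_filter, mem_univ, true_and, mem_insert, mem_singleton, Prod.mk.injEq]
      grind
    rw [hpairs, sum_insert (by simp [hab.ne, hbc.ne]), sum_pair (by simp [hab.ne])]
    nlinarith [sq_nonneg (γ a b + γ a c), sq_nonneg (γ a c + γ b c), sq_nonneg (γ a b - γ b c)]
  case h_2 =>
    rw [zero_pow two_ne_zero]
    positivity

lemma sum_sq_dOne_le {n : ℕ} (γ : Fin n → Fin n → ℝ) :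
    ∑ τ : Finset (Fin n) with τ.card = 3, dOne γ τ ^ 2 ≤ 3 * ((n : ℝ) - 2) * normSq γ := by
  calc ∑ τ : Finset (Fin n) with τ.card = 3, dOne γ τ ^ 2
      ≤ ∑ τ : Finset (Fin n) with τ.card = 3,
          3 * ∑ p : Fin n × Fin n with p.1 < p.2 ∧ p.1 ∈ τ ∧ p.2 ∈ τ, γ p.1 p.2 ^ 2 :=
        sum_le_sum fun τ _ => sq_dOne_le γ τ
    _ = 3 * ∑ p : Fin n × Fin n with p.1 < p.2,
          ∑ τ : Finset (Fin n) with τ.card = 3 ∧ p.1 ∈ τ ∧ p.2 ∈ τ, γ p.1 p.2 ^ 2 := by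
        rw [← mul_sum]
        congr 1
        exact sum_comm' fun τ p => by simp only [mem_filter, mem_univ, true_and]; tauto
    _ = 3 * ∑ p : Fin n × Fin n with p.1 < p.2, ((n : ℝ) - 2) * γ p.1 p.2 ^ 2 := by
        congr 1
        refine sum_congr rfl fun p hp => ?_
        have hlt : p.1 < p.2 := (mem_filter.mp hp).2
        have hn : 2 ≤ n := by have := p.2.isLt; rw [Fin.lt_def] at hlt; omega
        rw [sum_const, card_filter_card_eq_three_mem_mem hlt.ne, nsmul_eq_mul,
          Nat.cast_sub hn, Nat.cast_ofNat]
    _ = 3 * ((n : ℝ) - 2) * normSq γ := by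
        rw [normSq_eq_sum_pairs, ← mul_sum, mul_assoc]

lemma dOne_add_coboundary {n : ℕ} (β : Fin n → Fin n → ℝ) (g : Fin n → ℝ) (f : Finset (Fin n)) :
    dOne (fun u v => β u v + (g u - g v)) f = dOne β f := by
  unfold dOne
  split <;> ring

lemma sum_sum_eq_zero_of_antisymm {ι : Type*} [Fintype ι] {β : ι → ι → ℝ}
    (hβ : ∀ u v, β u v = -β v u) : ∑ u, ∑ v, β u v = 0 := by
  have h : ∑ u, ∑ v, β u v = ∑ u, ∑ v, -β u v := by
    rw [sum_comm]
    exact sum_congr rfl fun u _ => sum_congr rfl fun v _ => hβ v u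
  simp only [sum_neg_distrib] at h
  linarith

/-- Subtracting the coboundary of `div β / n` makes an antisymmetric cochain coclosed, since on
the complete graph the Laplacian acts as multiplication by `n` on functions of sum zero. -/
noncomputable def coclosedPart {n : ℕ} (β : Fin n → Fin n → ℝ) : Fin n → Fin n → ℝ :=
  fun u v => β u v + ((∑ w, β w u) / n - (∑ w, β w v) / n)

lemma coclosedPart_antisymm {n : ℕ} {β : Fin n → Fin n → ℝ} (hβ : ∀ u v, β u v = -β v u)
    (u v : Fin n) : coclosedPart β u v = -coclosedPart β v u := by
  simp only [coclosedPart, hβ u v]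
  ring

lemma sum_erase_coclosedPart {n : ℕ} {β : Fin n → Fin n → ℝ} (hβ : ∀ u v, β u v = -β v u)
    (v : Fin n) : ∑ u ∈ univ.erase v, coclosedPart β u v = 0 := by
  have hn : (n : ℝ) ≠ 0 := Nat.cast_ne_zero.mpr v.pos.ne'
  have hvv : coclosedPart β v v = 0 := by
    have := coclosedPart_antisymm hβ v v
    linarith
  rw [sum_erase_eq_sub (mem_univ v), hvv, sub_zero]
  have hdiv : ∑ u, ∑ w, β w u = 0 := by rw [sum_comm]; exact sum_sum_eq_zero_of_antisymm hβ
  simp only [coclosedPart, sum_add_distrib, sum_sub_distrib, ← sum_div, hdiv, sum_const,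
    card_univ, Fintype.card_fin, nsmul_eq_mul]
  field_simp
  ring

def HasCoclosedSpectralGap {n : ℕ} (X : Finset (Finset (Fin n))) (lam : ℝ) : Prop :=
  ∀ β : Fin n → Fin n → ℝ, (∀ u v, β u v = -β v u) →
    (∀ v : Fin n, ∑ u ∈ univ.erase v, β u v = 0) → lam * normSq β ≤ ∑ f ∈ X, dOne β f ^ 2

lemma lam_mul_sum_sq_dOne_le {n : ℕ} (hn : 2 ≤ n) (X : Finset (Finset (Fin n))) {lam : ℝ}
    (hlam : 0 ≤ lam) (hspec : HasCoclosedSpectralGap X lam)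
    {β : Fin n → Fin n → ℝ} (hβ : ∀ u v, β u v = -β v u) :
    lam * ∑ τ : Finset (Fin n) with τ.card = 3, dOne β τ ^ 2 ≤
      3 * ((n : ℝ) - 2) * ∑ f ∈ X, dOne β f ^ 2 := by
  have hd : dOne (coclosedPart β) = dOne β := funext (dOne_add_coboundary β _)
  have hn' : (0 : ℝ) ≤ 3 * ((n : ℝ) - 2) := by
    have : (2 : ℝ) ≤ n := by exact_mod_cast hn
    linarith
  rw [← hd]
  calc lam * ∑ τ : Finset (Fin n) with τ.card = 3, dOne (coclosedPart β) τ ^ 2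
      ≤ lam * (3 * ((n : ℝ) - 2) * normSq (coclosedPart β)) :=
        mul_le_mul_of_nonneg_left (sum_sq_dOne_le _) hlam
    _ = 3 * ((n : ℝ) - 2) * (lam * normSq (coclosedPart β)) := by ring
    _ ≤ 3 * ((n : ℝ) - 2) * ∑ f ∈ X, dOne (coclosedPart β) f ^ 2 :=
        mul_le_mul_of_nonneg_left
          (hspec _ (coclosedPart_antisymm hβ) (sum_erase_coclosedPart hβ)) hn'

lemma exists_coords {ι H : Type*} [Finite ι] [NormedAddCommGroup H] [InnerProductSpace ℝ H]
    (φ : ι → H) :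
    ∃ (m : ℕ) (x : Fin m → ι → ℝ), ∀ u v, inner ℝ (φ u) (φ v) = ∑ i, x i u * x i v := by
  let V := Submodule.span ℝ (Set.range φ)
  have : FiniteDimensional ℝ V := FiniteDimensional.span_of_finite ℝ (Set.finite_range φ)
  let ψ : ι → V := fun u => ⟨φ u, Submodule.subset_span ⟨u, rfl⟩⟩
  let b := stdOrthonormalBasis ℝ V
  refine ⟨Module.finrank ℝ V, fun i u => b.repr (ψ u) i, fun u v => ?_⟩
  rw [← Submodule.coe_inner V (ψ u) (ψ v), ← b.repr.inner_map_map, PiLp.inner_apply]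
  simp [mul_comm]

lemma sum_sq_mul_sub_mul {ι : Type*} [Fintype ι] (P Q : ι → ℝ) :
    ∑ p : ι × ι, (P p.1 * Q p.2 - P p.2 * Q p.1) ^ 2 =
      2 * ((∑ i, P i ^ 2) * (∑ i, Q i ^ 2) - (∑ i, P i * Q i) ^ 2) := by
  have h : ∀ p : ι × ι, (P p.1 * Q p.2 - P p.2 * Q p.1) ^ 2 =
      P p.1 ^ 2 * Q p.2 ^ 2 + Q p.1 ^ 2 * P p.2 ^ 2 - 2 * (P p.1 * Q p.1 * (P p.2 * Q p.2)) :=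
    fun p => by ring
  simp only [h, sum_add_distrib, sum_sub_distrib, ← mul_sum, Fintype.sum_prod_type,
    ← sum_mul]
  ring

/-- The integral of `x i dx j - x j dx i` along the segment from `u` to `v`. -/
def wedgeCochain {α : Type*} {m : ℕ} (x : Fin m → α → ℝ) (p : Fin m × Fin m) : α → α → ℝ :=
  fun u v => x p.1 u * x p.2 v - x p.2 u * x p.1 v

lemma wedgeCochain_antisymm {α : Type*} {m : ℕ} (x : Fin m → α → ℝ) (p : Fin m × Fin m)
    (u v : α) : wedgeCochain x p u v = -wedgeCochain x p v u := by
  simp only [wedgeCochain]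
  ring

lemma sum_sq_dOne_wedgeCochain {n m : ℕ} {H : Type*} [NormedAddCommGroup H]
    [InnerProductSpace ℝ H] {φ : Fin n → H} {x : Fin m → Fin n → ℝ}
    (hx : ∀ u v, inner ℝ (φ u) (φ v) = ∑ i, x i u * x i v) (f : Finset (Fin n)) :
    ∑ p, dOne (wedgeCochain x p) f ^ 2 = 8 * triArea φ f ^ 2 := by
  have hdiff : ∀ a b c,
      inner ℝ (φ b - φ a) (φ c - φ a) = ∑ i, (x i b - x i a) * (x i c - x i a) := by
    intro a b c
    simp only [inner_sub_left, inner_sub_right, hx, ← sum_sub_distrib]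
    exact sum_congr rfl fun i _ => by ring
  unfold dOne triArea
  split
  case h_1 a b c _ =>
    set P := fun i => x i b - x i a
    set Q := fun i => x i c - x i a
    have hcross : ∀ p : Fin m × Fin m, wedgeCochain x p a b - wedgeCochain x p a c +
        wedgeCochain x p b c = P p.1 * Q p.2 - P p.2 * Q p.1 := fun p => by
      simp only [wedgeCochain, P, Q]
      ring
    simp only [hcross, ← real_inner_self_eq_norm_sq, hdiff, sum_sq_mul_sub_mul, ← sq]
    rw [mul_pow, Real.sq_sqrt]
    · ring
    · exact sub_nonneg.mpr (sum_mul_sq_le_sq_mul_sq _ _ _)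
  case h_2 => simp

lemma sum_sq_triArea_eq {n m : ℕ} {H : Type*} [NormedAddCommGroup H]
    [InnerProductSpace ℝ H] {φ : Fin n → H} {x : Fin m → Fin n → ℝ}
    (hx : ∀ u v, inner ℝ (φ u) (φ v) = ∑ i, x i u * x i v) (S : Finset (Finset (Fin n))) :
    ∑ f ∈ S, triArea φ f ^ 2 = (∑ p, ∑ f ∈ S, dOne (wedgeCochain x p) f ^ 2) / 8 := by
  rw [sum_comm, eq_div_iff (by norm_num), sum_mul]
  exact sum_congr rfl fun f _ => by rw [sum_sq_dOne_wedgeCochain hx, mul_comm]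

lemma lam_mul_sum_sq_triArea_le {n : ℕ} (hn : 2 ≤ n) {H : Type*} [NormedAddCommGroup H]
    [InnerProductSpace ℝ H] (X : Finset (Finset (Fin n))) {lam : ℝ} (hlam : 0 ≤ lam)
    (hspec : HasCoclosedSpectralGap X lam) (φ : Fin n → H) :
    lam * ∑ τ : Finset (Fin n) with τ.card = 3, triArea φ τ ^ 2 ≤
      3 * ((n : ℝ) - 2) * ∑ f ∈ X, triArea φ f ^ 2 := by
  obtain ⟨m, x, hx⟩ := exists_coords φ
  rw [sum_sq_triArea_eq hx, sum_sq_triArea_eq hx, mul_div_assoc', mul_div_assoc', mul_sum,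
    mul_sum]
  exact div_le_div_of_nonneg_right (sum_le_sum fun p _ =>
    lam_mul_sum_sq_dOne_le hn X hlam hspec (wedgeCochain_antisymm x p)) (by norm_num)

theorem stmt0_general {n : ℕ} (hn : 3 ≤ n)
    {H : Type*} [NormedAddCommGroup H] [InnerProductSpace ℝ H]
    (X : Finset (Finset (Fin n)))
    (lam : ℝ) (hlam : 0 ≤ lam)
    (hspec : ∀ β : Fin n → Fin n → ℝ, (∀ u v, β u v = - β v u) →
      (∀ v : Fin n, ∑ u ∈ Finset.univ.erase v, β u v = 0) →
      ∑ f ∈ X, dOne β f ^ 2 ≥ lam * normSq β)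
    (φ : Fin n → H)
    (hφ : ∀ τ : Finset (Fin n), τ.card = 3 → triArea φ τ ≥ (fillIn X τ : ℝ)) :
    ∑ f ∈ X, triArea φ f ^ 2 ≥
      (lam / (3 * ((n : ℝ) - 2))) *
        ∑ τ ∈ Finset.univ.filter (fun τ : Finset (Fin n) => τ.card = 3),
          (fillIn X τ : ℝ) ^ 2 := by
  have hpos : 0 < 3 * ((n : ℝ) - 2) := by
    have : (3 : ℝ) ≤ n := by exact_mod_cast hn
    linarith
  have hfill : ∑ τ : Finset (Fin n) with τ.card = 3, (fillIn X τ : ℝ) ^ 2 ≤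
      ∑ τ : Finset (Fin n) with τ.card = 3, triArea φ τ ^ 2 :=
    sum_le_sum fun τ hτ => pow_le_pow_left₀ (Nat.cast_nonneg _) (hφ τ (mem_filter.mp hτ).2) 2
  rw [ge_iff_le, div_mul_eq_mul_div, div_le_iff₀ hpos, mul_comm _ (3 * _)]
  exact (mul_le_mul_of_nonneg_left hfill hlam).trans
    (lam_mul_sum_sq_triArea_le (by omega) X hlam hspec φ)

theorem stmt0 {n : ℕ} (hn : 3 ≤ n)
    {H : Type*} [NormedAddCommGroup H] [InnerProductSpace ℝ H]
    (X : Finset (Finset (Fin n))) (hX3 : ∀ f ∈ X, f.card = 3)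
    (hfill : ∀ τ : Finset (Fin n), τ.card = 3 → ∃ y ⊆ X, IsFilling y τ)
    (lam : ℝ) (hlam : 0 ≤ lam)
    (hspec : ∀ β : Fin n → Fin n → ℝ, (∀ u v, β u v = - β v u) →
      (∀ v : Fin n, ∑ u ∈ Finset.univ.erase v, β u v = 0) →
      ∑ f ∈ X, dOne β f ^ 2 ≥ lam * normSq β)
    (φ : Fin n → H)
    (hφ : ∀ τ : Finset (Fin n), τ.card = 3 → triArea φ τ ≥ (fillIn X τ : ℝ)) :
    ∑ f ∈ X, triArea φ f ^ 2 ≥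
      (lam / (3 * ((n : ℝ) - 2))) *
        ∑ τ ∈ Finset.univ.filter (fun τ : Finset (Fin n) => τ.card = 3),
          (fillIn X τ : ℝ) ^ 2 :=
  stmt0_general hn X lam hlam hspec φ hφ
end

section
/- Let n ≥ 3, let g assign a nonnegative real number to each 2-element subset of Fin n, and let F assign a nonnegative real number to each 3-element subset of Fin n. Suppose that for every 3-element subset τ = {a,b,c} of Fin n one has g({a,b}) + g({a,c}) + g({b,c}) ≥ F(τ). Then (n−2)·Σ_e g(e)² ≥ (1/3)·Σ_τ F(τ)², where the first sum runs over all 2-element subsets e of Fin n and the second sum runs over all 3-element subsets τ of Fin n. -/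
/-!
Cauchy–Schwarz on a triangle gives `F(τ)² ≤ (g(ab) + g(ac) + g(bc))² ≤ 3 Σ_{e ⊂ τ} g(e)²`; summing
over all triangles counts every edge once for each of the `n - 2` triangles containing it.
-/

open Finset

section
variable {α : Type*} [DecidableEq α]

theorem powersetCard_two_triple {a b c : α} (hab : a ≠ b) (hac : a ≠ c) (hbc : b ≠ c) :
    powersetCard 2 {a, b, c} = {{a, b}, {a, c}, {b, c}} := by
  ext e
  simp only [mem_powersetCard, card_eq_two, mem_insert, mem_singleton]
  constructor
  · rintro ⟨hsub, x, y, hxy, rfl⟩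
    simp only [insert_subset_iff, mem_insert, mem_singleton, singleton_subset_iff] at hsub
    grind [pair_comm]
  · rintro (rfl | rfl | rfl) <;> grind [insert_subset_iff]

theorem sum_powersetCard_two_triple {M : Type*} [AddCommMonoid M] {a b c : α} (hab : a ≠ b)
    (hac : a ≠ c) (hbc : b ≠ c) (f : Finset α → M) :
    ∑ e ∈ powersetCard 2 {a, b, c}, f e = f {a, b} + f {a, c} + f {b, c} := by
  have hc : ∀ s : Finset α, c ∈ s → {a, b} ≠ s := fun s hs h => by
    simp [← h, hac.symm, hbc.symm] at hs
  have ha : a ∉ ({b, c} : Finset α) := by simp [hab, hac]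
  rw [powersetCard_two_triple hab hac hbc, sum_insert, sum_pair, add_assoc]
  · exact fun h => ha (h ▸ mem_insert_self a _)
  · simp [hc {a, c} (by simp), hc {b, c} (by simp)]

variable [Fintype α]

theorem card_superset_powersetCard_succ {k : ℕ} {e : Finset α} (he : #e = k) :
    #{τ ∈ powersetCard (k + 1) univ | e ⊆ τ} = Fintype.card α - k := by
  rw [← he, ← card_compl]
  symm
  refine card_bij (fun x _ => insert x e) ?_ ?_ ?_
  · intro x hx
    simp only [mem_compl] at hx
    simp [card_insert_of_notMem hx, subset_insert]
  · intro x hx y _ hxy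
    exact (insert_inj (mem_compl.mp hx)).mp hxy
  · intro τ hτ
    simp only [mem_filter, mem_powersetCard_univ] at hτ
    obtain ⟨x, hx⟩ := card_eq_one.mp (by rw [card_sdiff_of_subset hτ.2, hτ.1]; omega :
      #(τ \ e) = 1)
    have hxτe : x ∈ τ \ e := hx ▸ mem_singleton_self x
    refine ⟨x, mem_compl.mpr (mem_sdiff.mp hxτe).2, ?_⟩
    rw [← singleton_union, ← hx, sdiff_union_of_subset hτ.2]

theorem sum_powersetCard_succ_sum_powersetCard {R : Type*} [Ring R] (k : ℕ)
    (f : Finset α → R) :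
    ∑ τ ∈ powersetCard (k + 1) univ, ∑ e ∈ τ.powersetCard k, f e =
      ((Fintype.card α : R) - k) * ∑ e ∈ powersetCard k univ, f e := by
  rw [sum_comm' (t' := powersetCard k univ)
    (s' := fun e => {τ ∈ powersetCard (k + 1) univ | e ⊆ τ}), mul_sum]
  · refine sum_congr rfl fun e he => ?_
    have hek := mem_powersetCard_univ.mp he
    rw [sum_const, card_superset_powersetCard_succ hek, nsmul_eq_mul,
      Nat.cast_sub (hek ▸ card_le_univ e)]
  · intro τ e
    simp only [mem_powersetCard, mem_filter, subset_univ, true_and]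
    tauto

end

theorem sq_le_three_mul_sum_sq {f x y z : ℝ} (hf : 0 ≤ f) (h : f ≤ x + y + z) :
    f ^ 2 ≤ 3 * (x ^ 2 + y ^ 2 + z ^ 2) := by
  nlinarith [sq_nonneg (x - y), sq_nonneg (x - z), sq_nonneg (y - z)]

theorem stmt1_general {n : ℕ} (g F : Finset (Fin n) → ℝ)
    (hF : ∀ τ : Finset (Fin n), τ.card = 3 → 0 ≤ F τ)
    (h : ∀ a b c : Fin n, a ≠ b → a ≠ c → b ≠ c →
      g {a, b} + g {a, c} + g {b, c} ≥ F {a, b, c}) :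
    ((n : ℝ) - 2) * ∑ e ∈ Finset.univ.filter (fun e : Finset (Fin n) => e.card = 2), g e ^ 2 ≥
      (1/3) * ∑ τ ∈ Finset.univ.filter (fun τ : Finset (Fin n) => τ.card = 3), F τ ^ 2 := by
  have hfilter (k : ℕ) : univ.filter (fun s : Finset (Fin n) => #s = k) = powersetCard k univ := by
    ext; simp
  have htriangle : ∀ τ ∈ powersetCard 3 univ, F τ ^ 2 ≤ 3 * ∑ e ∈ τ.powersetCard 2, g e ^ 2 := by
    intro τ hτ
    obtain ⟨a, b, c, hab, hac, hbc, rfl⟩ := card_eq_three.mp (mem_powersetCard_univ.mp hτ)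
    rw [sum_powersetCard_two_triple hab hac hbc]
    exact sq_le_three_mul_sum_sq (hF _ (mem_powersetCard_univ.mp hτ)) (h a b c hab hac hbc)
  rw [hfilter, hfilter, ge_iff_le]
  calc (1 / 3) * ∑ τ ∈ powersetCard 3 univ, F τ ^ 2
      ≤ ∑ τ ∈ powersetCard 3 univ, ∑ e ∈ τ.powersetCard 2, g e ^ 2 := by
        rw [mul_sum]
        gcongr with τ hτ
        linarith [htriangle τ hτ]
    _ = ((Fintype.card (Fin n) : ℝ) - 2) * ∑ e ∈ powersetCard 2 univ, g e ^ 2 :=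
        sum_powersetCard_succ_sum_powersetCard 2 _
    _ = ((n : ℝ) - 2) * ∑ e ∈ powersetCard 2 univ, g e ^ 2 := by rw [Fintype.card_fin]

theorem stmt1 {n : ℕ} (hn : 3 ≤ n) (g F : Finset (Fin n) → ℝ)
    (hg : ∀ e : Finset (Fin n), e.card = 2 → 0 ≤ g e)
    (hF : ∀ τ : Finset (Fin n), τ.card = 3 → 0 ≤ F τ)
    (h : ∀ a b c : Fin n, a ≠ b → a ≠ c → b ≠ c →
      g {a, b} + g {a, c} + g {b, c} ≥ F {a, b, c}) :
    ((n : ℝ) - 2) * ∑ e ∈ Finset.univ.filter (fun e : Finset (Fin n) => e.card = 2), g e ^ 2 ≥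
      (1/3) * ∑ τ ∈ Finset.univ.filter (fun τ : Finset (Fin n) => τ.card = 3), F τ ^ 2 :=
  stmt1_general g F hF h
end

section
/- Let ε > 0 and α > 0 satisfy 2α + ε < 1/2, and set p(n) = n^{ε−1}. Then the probability under the Linial–Meshulam distribution Y_{n,p(n)} of the event that there exists a set y ⊆ Y with |y| < n^α which is a ℤ/2-filling of the triangle τ₀ = {0,1,2} tends to 0 as n → ∞. -/
open Finset

/-- The set `T_n` of all 3-element subsets of `Fin n`. -/
def triangles (n : ℕ) : Finset (Finset (Fin n)) :=
  Finset.univ.filter fun s => s.card = 3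

/-- The triangle `{0, 1, 2}` in `Fin n` (for `n ≥ 3`). -/
def tri0 (n : ℕ) : Finset (Fin n) :=
  Finset.univ.filter fun v => (v : ℕ) < 3

-- The probability of the event `A` under the Linial–Meshulam distribution `Y_{n,p}`.
open Classical in
noncomputable def LMprob (n : ℕ) (p : ℝ) (A : Set (Finset (Finset (Fin n)))) : ℝ :=
  ∑ Y ∈ (triangles n).powerset,
    if Y ∈ A then p ^ Y.card * (1 - p) ^ ((triangles n).card - Y.card) else 0

/-!
Every filling contains a minimal one, and a minimal filling `y` has no nonempty subfamily that is
a ℤ/2-cycle, while its support is connected. In the ℤ/2-chain complex of `y` the triangles are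
therefore independent vectors in the kernel of `∂₁ : C₁ → C₀`, whose rank is at least `|V| - 1`,
so `|y| + |V| ≤ |E| + 1`. Each edge of `y` off `τ₀` lies in an even, hence at least two, number
of triangles, so `2|E| ≤ 3|y| + 3`. Thus a minimal filling with `k` triangles has at most
`(k - 1)/2` vertices outside `τ₀`; for `k ≤ n^α` there are at most `2^k n^((k-1)/2) (192 k²)^k`
of them, each lying in `Y` with probability `p^k`, and the union bound over `k` gives
`O(n^(-1/2))` as soon as `384 n^(2α + ε - 1/2) ≤ 1/2`.
-/

theorem linearIndependent_zmod_two_of_forall_sum_eq_zero {ι M : Type*} [AddCommGroup M]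
    [Module (ZMod 2) M] {v : ι → M} (h : ∀ s : Finset ι, ∑ i ∈ s, v i = 0 → s = ∅) :
    LinearIndependent (ZMod 2) v := by
  classical
  rw [linearIndependent_iff']
  intro s g hg i hi
  by_contra hgi
  have hsupp := h {j ∈ s | g j ≠ 0} <| by
    rw [sum_filter, ← hg]
    refine sum_congr rfl fun j _ => ?_
    rcases (show ∀ a : ZMod 2, a = 0 ∨ a = 1 by decide) (g j) with h0 | h1 <;> simp [*]
  exact (eq_empty_iff_forall_notMem.mp hsupp) i (mem_filter.mpr ⟨hi, hgi⟩)

lemma card_filter_card_le_le_mul_pow {β : Type*} [Fintype β] [DecidableEq β] [Nonempty β]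
    (j : ℕ) : #{s : Finset β | #s ≤ j} ≤ (j + 1) * Fintype.card β ^ j := by
  calc #{s : Finset β | #s ≤ j}
      ≤ #((range (j + 1)).biUnion fun i => (univ : Finset β).powersetCard i) :=
        card_le_card fun s hs => mem_biUnion.mpr ⟨#s,
          mem_range.mpr (Nat.lt_succ_of_le (mem_filter.mp hs).2),
          mem_powersetCard.mpr ⟨subset_univ s, rfl⟩⟩
    _ ≤ ∑ i ∈ range (j + 1), #((univ : Finset β).powersetCard i) := card_biUnion_le
    _ ≤ ∑ _i ∈ range (j + 1), Fintype.card β ^ j := sum_le_sum fun i hi => by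
        rw [card_powersetCard, card_univ]
        exact (Nat.choose_le_pow _ _).trans
          (Nat.pow_le_pow_right Fintype.card_pos (Nat.lt_succ_iff.mp (mem_range.mp hi)))
    _ = (j + 1) * Fintype.card β ^ j := by rw [sum_const, card_range, smul_eq_mul]

lemma Nat.choose_le_exp_one_mul_div_pow (N k : ℕ) :
    (N.choose k : ℝ) ≤ (Real.exp 1 * N / k) ^ k := by
  rcases k.eq_zero_or_pos with rfl | hk
  · simp
  have hk' : (0 : ℝ) < k := by exact_mod_cast hk
  calc (N.choose k : ℝ) ≤ (N : ℝ) ^ k / k.factorial := Nat.choose_le_pow_div k N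
    _ = (N / k : ℝ) ^ k * ((k : ℝ) ^ k / k.factorial) := by
        rw [div_pow]; field_simp
    _ ≤ (N / k : ℝ) ^ k * Real.exp k := by
        gcongr; exact Real.pow_div_factorial_le_exp _ (Nat.cast_nonneg k) k
    _ = (Real.exp 1 * N / k) ^ k := by rw [← Real.exp_one_pow]; ring

lemma sum_Icc_pow_le_two {q : ℝ} (hq0 : 0 ≤ q) (hq : q ≤ 1 / 2) (K : ℕ) :
    ∑ k ∈ Icc 1 K, q ^ k ≤ 2 :=
  calc ∑ k ∈ Icc 1 K, q ^ k
      ≤ ∑ k ∈ Icc 1 K, (1 / 2 : ℝ) ^ k := sum_le_sum fun k _ => by gcongr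
    _ ≤ ∑ k ∈ range (K + 1), (1 / 2 : ℝ) ^ k :=
        sum_le_sum_of_subset_of_nonneg
          (fun k hk => mem_range.mpr (Nat.lt_succ_of_le (mem_Icc.mp hk).2))
          (fun _ _ _ => by positivity)
    _ ≤ 2 := sum_geometric_two_le _

lemma tendsto_natCast_rpow_atTop_nhds_zero {c : ℝ} (hc : c < 0) :
    Filter.Tendsto (fun n : ℕ => (n : ℝ) ^ c) Filter.atTop (nhds 0) := by
  have := (tendsto_rpow_neg_atTop (neg_pos.mpr hc)).comp tendsto_natCast_atTop_atTop
  simpa [Function.comp_def] using this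

namespace TwoComplex

open scoped Matrix

variable {α : Type*}

def Adj (y : Finset (Finset α)) (a b : α) : Prop := ∃ t ∈ y, a ∈ t ∧ b ∈ t

variable {y : Finset (Finset α)}

lemma Adj.symm {a b : α} (h : Adj y a b) : Adj y b a :=
  let ⟨t, ht, ha, hb⟩ := h; ⟨t, ht, hb, ha⟩

lemma reflTransGen_adj_symm {a b : α} (h : Relation.ReflTransGen (Adj y) a b) :
    Relation.ReflTransGen (Adj y) b a :=
  Relation.ReflTransGen.mono (fun _ _ hab => Adj.symm hab) _ _ (Relation.reflTransGen_swap.mpr h)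

variable [DecidableEq α]

def verts (y : Finset (Finset α)) : Finset α := y.biUnion id

def edges (y : Finset (Finset α)) : Finset (Finset α) := y.biUnion (powersetCard 2)

def IsCycle (z : Finset (Finset α)) : Prop := ∀ e : Finset α, #e = 2 → Even #{t ∈ z | e ⊆ t}

def boundary₁ (y : Finset (Finset α)) : Matrix (verts y) (edges y) (ZMod 2) :=
  Matrix.of fun v e => if (v : α) ∈ (e : Finset α) then 1 else 0

def boundary₂ (y : Finset (Finset α)) : Matrix (edges y) y (ZMod 2) :=
  Matrix.of fun e t => if (e : Finset α) ⊆ t then 1 else 0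

@[simp] lemma mem_verts {v : α} : v ∈ verts y ↔ ∃ t ∈ y, v ∈ t := by simp [verts]

@[simp] lemma mem_edges {e : Finset α} : e ∈ edges y ↔ ∃ t ∈ y, e ⊆ t ∧ #e = 2 := by
  simp [edges]

lemma Adj.left_mem_verts {a b : α} (h : Adj y a b) : a ∈ verts y :=
  let ⟨t, ht, ha, _⟩ := h; mem_verts.mpr ⟨t, ht, ha⟩

lemma Adj.right_mem_verts {a b : α} (h : Adj y a b) : b ∈ verts y :=
  let ⟨t, ht, _, hb⟩ := h; mem_verts.mpr ⟨t, ht, hb⟩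

lemma boundary₁_mul_boundary₂ (h3 : ∀ t ∈ y, #t = 3) : boundary₁ y * boundary₂ y = 0 := by
  ext v ⟨t, ht⟩
  simp only [Matrix.mul_apply, boundary₁, boundary₂, Matrix.of_apply, boole_mul, ← ite_and,
    Matrix.zero_apply]
  rw [sum_coe_sort (edges y) (fun e => if (v : α) ∈ e ∧ e ⊆ t then (1 : ZMod 2) else 0),
    sum_boole, ZMod.natCast_eq_zero_iff_even]
  have hfilter :
      {e ∈ edges y | (v : α) ∈ e ∧ e ⊆ t} = {e ∈ t.powersetCard 2 | {(v : α)} ⊆ e} := by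
    ext e
    simp only [mem_filter, mem_edges, mem_powersetCard, singleton_subset_iff]
    exact ⟨fun ⟨⟨_, _, _, he⟩, hv, het⟩ => ⟨⟨het, he⟩, hv⟩,
      fun ⟨⟨het, he⟩, hv⟩ => ⟨⟨t, ht, het, he⟩, hv, het⟩⟩
  by_cases hvt : (v : α) ∈ t
  · rw [hfilter, card_filter_powersetCard_subset _ _ _ (singleton_subset_iff.mpr hvt) (by simp),
      h3 t ht, card_singleton]
    decide
  · rw [hfilter, filter_false_of_mem fun e he hve =>
      hvt ((mem_powersetCard.mp he).1 (singleton_subset_iff.mp hve))]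
    simp

lemma rank_boundary₂ (hacyc : ∀ z ⊆ y, IsCycle z → z = ∅) : (boundary₂ y).rank = #y := by
  rw [← Matrix.rank_transpose, LinearIndependent.rank_matrix, Fintype.card_coe]
  refine linearIndependent_zmod_two_of_forall_sum_eq_zero fun s hs => ?_
  have hcyc : IsCycle (s.map (Function.Embedding.subtype _)) := by
    intro e he
    have hcard : #{t ∈ s.map (Function.Embedding.subtype _) | e ⊆ t}
        = #(s.filter fun t : y => e ⊆ (t : Finset α)) := by
      rw [filter_map, card_map]; rfl
    rw [hcard]
    by_cases hE : e ∈ edges y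
    · have := congrFun hs ⟨e, hE⟩
      rw [Finset.sum_apply] at this
      simpa only [Matrix.row, Matrix.transpose_apply, boundary₂, Matrix.of_apply, sum_boole,
        Pi.zero_apply, ZMod.natCast_eq_zero_iff_even] using this
    · rw [filter_false_of_mem fun (t : y) _ het => hE (mem_edges.mpr ⟨t, t.2, het, he⟩),
        card_empty]
      exact even_two_mul 0
  simpa using hacyc _ (fun t ht => by obtain ⟨t, _, rfl⟩ := mem_map.mp ht; exact t.2) hcyc

lemma apply_eq_of_adj {f : verts y → ZMod 2} (hf : (boundary₁ y)ᵀ *ᵥ f = 0) {a b : α}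
    (hab : Adj y a b) : f ⟨a, hab.left_mem_verts⟩ = f ⟨b, hab.right_mem_verts⟩ := by
  obtain ⟨t, ht, hat, hbt⟩ := hab
  by_cases heq : a = b
  · subst heq; rfl
  have hedge : {a, b} ∈ edges y :=
    mem_edges.mpr ⟨t, ht, insert_subset hat (singleton_subset_iff.mpr hbt), card_pair heq⟩
  have := congrFun hf ⟨{a, b}, hedge⟩
  rw [Matrix.mulVec, dotProduct, Fintype.sum_eq_add ⟨a, mem_verts.mpr ⟨t, ht, hat⟩⟩
    ⟨b, mem_verts.mpr ⟨t, ht, hbt⟩⟩ (by simpa using heq)] at this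
  · simpa [boundary₁, heq, Ne.symm heq, CharTwo.add_eq_zero] using this
  · rintro ⟨x, hx⟩ ⟨hxa, hxb⟩
    simp_all [boundary₁]

lemma apply_eq_of_reflTransGen {f : verts y → ZMod 2} (hf : (boundary₁ y)ᵀ *ᵥ f = 0) {v w : α}
    (hv : v ∈ verts y) (hw : w ∈ verts y) (hvw : Relation.ReflTransGen (Adj y) v w) :
    f ⟨v, hv⟩ = f ⟨w, hw⟩ := by
  induction hvw with
  | refl => rfl
  | tail _ hbc ih => exact (ih hbc.left_mem_verts).trans (apply_eq_of_adj hf hbc)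

lemma card_verts_le_rank_boundary₁_add_one
    (hconn : ∀ v ∈ verts y, ∀ w ∈ verts y, Relation.ReflTransGen (Adj y) v w) :
    #(verts y) ≤ (boundary₁ y).rank + 1 := by
  have hker : LinearMap.ker (boundary₁ y)ᵀ.mulVecLin ≤ Submodule.span (ZMod 2) {fun _ => 1} := by
    intro f hf
    rw [LinearMap.mem_ker, Matrix.mulVecLin_apply] at hf
    rw [Submodule.mem_span_singleton]
    rcases isEmpty_or_nonempty (verts y) with hV | ⟨⟨v₀⟩⟩
    · exact ⟨0, Subsingleton.elim _ _⟩
    · refine ⟨f v₀, funext fun w => ?_⟩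
      simpa using apply_eq_of_reflTransGen hf v₀.2 w.2 (hconn _ v₀.2 _ w.2)
  have hdim := LinearMap.finrank_range_add_finrank_ker (boundary₁ y)ᵀ.mulVecLin
  rw [Module.finrank_fintype_fun_eq_card, Fintype.card_coe] at hdim
  have := (Submodule.finrank_mono hker).trans (finrank_span_le_card _)
  rw [← Matrix.rank_transpose, Matrix.rank]
  simp only [Set.toFinset_singleton, card_singleton] at this
  omega

theorem card_add_card_verts_le_card_edges_add_one (h3 : ∀ t ∈ y, #t = 3)
    (hacyc : ∀ z ⊆ y, IsCycle z → z = ∅)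
    (hconn : ∀ v ∈ verts y, ∀ w ∈ verts y, Relation.ReflTransGen (Adj y) v w) :
    #y + #(verts y) ≤ #(edges y) + 1 := by
  have hrank := Matrix.rank_add_rank_le_card_of_mul_eq_zero (boundary₁_mul_boundary₂ h3)
  rw [rank_boundary₂ hacyc, Fintype.card_coe] at hrank
  have := card_verts_le_rank_boundary₁_add_one hconn
  omega

end TwoComplex

open TwoComplex

section Fillings

variable {n : ℕ} {y z : Finset (Finset (Fin n))} {τ : Finset (Fin n)}

def IsMinimalFilling (y : Finset (Finset (Fin n))) (τ : Finset (Fin n)) : Prop :=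
  IsFilling y τ ∧ ∀ z ⊆ y, IsFilling z τ → #y ≤ #z

lemma IsFilling.sdiff (hy : IsFilling y τ) (hzy : z ⊆ y) (hz : IsCycle z) :
    IsFilling (y \ z) τ := by
  refine ⟨fun t ht => hy.1 t (mem_sdiff.mp ht).1, fun e he => ?_⟩
  have hsub : {t ∈ z | e ⊆ t} ⊆ {t ∈ y | e ⊆ t} := filter_subset_filter _ hzy
  have hsdiff : {t ∈ y \ z | e ⊆ t} = {t ∈ y | e ⊆ t} \ {t ∈ z | e ⊆ t} := by
    ext; simp only [mem_filter, mem_sdiff]; tauto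
  rw [hsdiff, card_sdiff_of_subset hsub, ← hy.2 e he]
  have := Nat.even_iff.mp (hz e he)
  have := card_le_card hsub
  omega

lemma IsMinimalFilling.eq_empty_of_isCycle (hy : IsMinimalFilling y τ) (hzy : z ⊆ y)
    (hz : IsCycle z) : z = ∅ := by
  have := hy.2 _ sdiff_subset (hy.1.sdiff hzy hz)
  rw [card_sdiff_of_subset hzy] at this
  exact card_eq_zero.mp (by have := card_le_card hzy; omega)

lemma IsFilling.exists_isMinimalFilling (hy : IsFilling y τ) :
    ∃ x ⊆ y, IsMinimalFilling x τ := by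
  classical
  obtain ⟨x, hx, hmin⟩ := exists_min_image {x ∈ y.powerset | IsFilling x τ} card
    ⟨y, mem_filter.mpr ⟨mem_powerset_self y, hy⟩⟩
  rw [mem_filter, mem_powerset] at hx
  exact ⟨x, hx.1, hx.2, fun z hzx hz =>
    hmin z (mem_filter.mpr ⟨mem_powerset.mpr (hzx.trans hx.1), hz⟩)⟩

lemma IsFilling.exists_mem_superset (hy : IsFilling y τ) {e : Finset (Fin n)} (he : #e = 2)
    (heτ : e ⊆ τ) : ∃ t ∈ y, e ⊆ t := by
  have := hy.2 e he
  rw [if_pos heτ] at this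
  obtain ⟨t, ht⟩ := card_pos.mp (show 0 < #{t ∈ y | e ⊆ t} by omega)
  exact ⟨t, (mem_filter.mp ht).1, (mem_filter.mp ht).2⟩

lemma IsFilling.adj_of_mem (hy : IsFilling y τ) {a b : Fin n} (ha : a ∈ τ) (hb : b ∈ τ)
    (hab : a ≠ b) : Adj y a b := by
  obtain ⟨t, ht, hab⟩ := hy.exists_mem_superset (card_pair hab)
    (insert_subset ha (singleton_subset_iff.mpr hb))
  exact ⟨t, ht, hab (mem_insert_self _ _), hab (mem_insert_of_mem (mem_singleton_self _))⟩

lemma IsFilling.subset_verts (hy : IsFilling y τ) (hτ : 2 ≤ #τ) : τ ⊆ verts y := by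
  intro a ha
  obtain ⟨b, hb, hba⟩ := exists_mem_ne hτ a
  exact (hy.adj_of_mem ha hb (Ne.symm hba)).left_mem_verts

lemma IsFilling.nonempty (hy : IsFilling y τ) (hτ : 2 ≤ #τ) : y.Nonempty := by
  obtain ⟨a, ha⟩ := card_pos.mp (show 0 < #τ by omega)
  obtain ⟨t, ht, -⟩ := mem_verts.mp (hy.subset_verts hτ ha)
  exact ⟨t, ht⟩

lemma IsFilling.two_mul_card_edges_le (hy : IsFilling y τ) :
    2 * #(edges y) ≤ 3 * #y + (#τ).choose 2 := by
  have hsum : ∑ e ∈ edges y, #{t ∈ y | e ⊆ t} = 3 * #y := by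
    have := sum_card_bipartiteAbove_eq_sum_card_bipartiteBelow (s := edges y) (t := y)
      (r := fun e t => e ⊆ t)
    simp only [bipartiteAbove, bipartiteBelow] at this
    rw [this, sum_congr rfl fun t ht => ?_, sum_const, smul_eq_mul, mul_comm]
    have : {e ∈ edges y | e ⊆ t} = t.powersetCard 2 := by
      ext e
      simp only [mem_filter, mem_edges, mem_powersetCard]
      exact ⟨fun ⟨⟨_, _, _, he⟩, het⟩ => ⟨het, he⟩, fun ⟨het, he⟩ => ⟨⟨t, ht, het, he⟩, het⟩⟩
    rw [this, card_powersetCard, hy.1 t ht]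
    rfl
  have hτedges : #{e ∈ edges y | e ⊆ τ} ≤ (#τ).choose 2 := by
    rw [← card_powersetCard]
    exact card_le_card fun e he => mem_powersetCard.mpr
      ⟨(mem_filter.mp he).2, (mem_edges.mp (mem_filter.mp he).1).choose_spec.2.2⟩
  have hdeg : ∀ e ∈ edges y, 2 ≤ #{t ∈ y | e ⊆ t} + if e ⊆ τ then 1 else 0 := by
    intro e he
    obtain ⟨t, ht, het, he2⟩ := mem_edges.mp he
    have hpos : 0 < #{t ∈ y | e ⊆ t} := card_pos.mpr ⟨t, mem_filter.mpr ⟨ht, het⟩⟩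
    have hpar := hy.2 e he2
    split_ifs at hpar ⊢ <;> omega
  have := sum_le_sum hdeg
  rw [sum_const, smul_eq_mul, sum_add_distrib, hsum, ← card_filter] at this
  omega

-- The triangles with no vertex reachable from `a` form a cycle, so there are none.
lemma IsMinimalFilling.reflTransGen_adj (hy : IsMinimalFilling y τ) {a v : Fin n} (ha : a ∈ τ)
    (hv : v ∈ verts y) : Relation.ReflTransGen (Adj y) a v := by
  classical
  set Reach := Relation.ReflTransGen (Adj y) a
  have hτ : ∀ b ∈ τ, Reach b := fun b hb => by
    by_cases hab : a = b
    · exact hab ▸ Relation.ReflTransGen.refl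
    · exact Relation.ReflTransGen.single (hy.1.adj_of_mem ha hb hab)
  set z := {t ∈ y | ∀ x ∈ t, ¬ Reach x}
  have hz : IsCycle z := by
    intro e he
    by_cases hez : ∃ t ∈ z, e ⊆ t
    · obtain ⟨t, htz, het⟩ := hez
      obtain ⟨c, hc⟩ := card_pos.mp (show 0 < #e by omega)
      have hc' : ¬ Reach c := (mem_filter.mp htz).2 c (het hc)
      have hfilter : {t ∈ z | e ⊆ t} = {t ∈ y | e ⊆ t} := by
        ext t'
        simp only [z, mem_filter, and_assoc]
        exact ⟨fun h => ⟨h.1, h.2.2⟩, fun ⟨ht', het'⟩ =>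
          ⟨ht', fun x hx hxr => hc' (hxr.tail ⟨t', ht', hx, het' hc⟩), het'⟩⟩
      have hpar := hy.1.2 e he
      rw [if_neg fun heτ => hc' (hτ c (heτ hc))] at hpar
      rw [hfilter]
      exact Nat.even_iff.mpr hpar
    · push Not at hez
      rw [filter_false_of_mem hez, card_empty]
      exact even_two_mul 0
  obtain ⟨t, ht, hvt⟩ := mem_verts.mp hv
  have hz0 : z = ∅ := hy.eq_empty_of_isCycle (filter_subset _ y) hz
  have htz : t ∉ z := by
    rw [hz0]
    exact notMem_empty t
  simp only [z, mem_filter, not_and, not_forall, not_not] at htz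
  obtain ⟨x, hxt, hx⟩ := htz ht
  exact hx.tail ⟨t, ht, hxt, hvt⟩

lemma IsMinimalFilling.two_mul_card_verts_sdiff_add_one_le (hy : IsMinimalFilling y τ)
    (hτ : #τ = 3) : 2 * #(verts y \ τ) + 1 ≤ #y := by
  obtain ⟨a, ha⟩ := card_pos.mp (show 0 < #τ by omega)
  have hτV := hy.1.subset_verts (by omega)
  have heuler := card_add_card_verts_le_card_edges_add_one hy.1.1
    (fun z hzy hz => hy.eq_empty_of_isCycle hzy hz) fun v hv w hw =>
      (reflTransGen_adj_symm (hy.reflTransGen_adj ha hv)).trans (hy.reflTransGen_adj ha hw)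
  have hedges := hy.1.two_mul_card_edges_le
  rw [hτ, show Nat.choose 3 2 = 3 from rfl] at hedges
  have := card_sdiff_of_subset hτV
  have := card_le_card hτV
  omega

def fewVertexComplexes (τ : Finset (Fin n)) (k : ℕ) : Finset (Finset (Finset (Fin n))) :=
  ({W | 2 * #W + 1 ≤ k} : Finset (Finset (Fin n))).biUnion fun W =>
    ((τ ∪ W).powersetCard 3).powersetCard k

lemma card_of_mem_fewVertexComplexes {k : ℕ} (hy : y ∈ fewVertexComplexes τ k) : #y = k := by
  obtain ⟨W, -, hyW⟩ := mem_biUnion.mp hy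
  exact (mem_powersetCard.mp hyW).2

lemma IsMinimalFilling.mem_fewVertexComplexes (hy : IsMinimalFilling y τ) (hτ : #τ = 3) :
    y ∈ fewVertexComplexes τ #y := by
  refine mem_biUnion.mpr ⟨verts y \ τ, mem_filter.mpr ⟨mem_univ _,
    hy.two_mul_card_verts_sdiff_add_one_le hτ⟩, mem_powersetCard.mpr ⟨fun t ht => ?_, rfl⟩⟩
  refine mem_powersetCard.mpr ⟨fun v hv => ?_, hy.1.1 t ht⟩
  rw [union_sdiff_self_eq_union]
  exact mem_union_right _ (mem_verts.mpr ⟨t, ht, hv⟩)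

lemma card_fewVertexComplexes_le (hn : 0 < n) (hτ : #τ ≤ 3) (k : ℕ) :
    #(fewVertexComplexes τ k)
      ≤ ((k - 1) / 2 + 1) * n ^ ((k - 1) / 2) * ((k + 3) ^ 3).choose k := by
  have : Nonempty (Fin n) := ⟨⟨0, hn⟩⟩
  exact calc #(fewVertexComplexes τ k)
      ≤ ∑ W ∈ {W : Finset (Fin n) | 2 * #W + 1 ≤ k},
          #(((τ ∪ W).powersetCard 3).powersetCard k) := card_biUnion_le
    _ ≤ ∑ _W ∈ {W : Finset (Fin n) | 2 * #W + 1 ≤ k}, ((k + 3) ^ 3).choose k := by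
        refine sum_le_sum fun W hW => ?_
        have hW := (mem_filter.mp hW).2
        rw [card_powersetCard, card_powersetCard]
        refine Nat.choose_le_choose _ ((Nat.choose_le_pow _ _).trans (Nat.pow_le_pow_left ?_ 3))
        have := card_union_le τ W
        omega
    _ ≤ ∑ _W ∈ {W : Finset (Fin n) | #W ≤ (k - 1) / 2}, ((k + 3) ^ 3).choose k :=
        sum_le_sum_of_subset_of_nonneg
          (fun W hW => mem_filter.mpr ⟨mem_univ _, by have := (mem_filter.mp hW).2; omega⟩)
          (fun _ _ _ => Nat.zero_le _)
    _ = #({W | #W ≤ (k - 1) / 2} : Finset (Finset (Fin n))) * ((k + 3) ^ 3).choose k := by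
        rw [sum_const, smul_eq_mul]
    _ ≤ ((k - 1) / 2 + 1) * n ^ ((k - 1) / 2) * ((k + 3) ^ 3).choose k := by
        refine Nat.mul_le_mul_right _ ?_
        simpa using card_filter_card_le_le_mul_pow (β := Fin n) ((k - 1) / 2)

lemma card_tri0 (hn : 3 ≤ n) : #(tri0 n) = 3 := by
  rw [tri0, Fin.card_filter_val_lt]
  omega

-- `192 = 3 · 4³` comes from `exp 1 ≤ 3` and `k + 3 ≤ 4k`, and `384 = 2 · 192` from
-- `(k - 1)/2 + 1 ≤ 2^k`.
lemma card_fewVertexComplexes_mul_pow_le {ε α : ℝ} (hn : 3 ≤ n) {k : ℕ} (hk : 1 ≤ k)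
    (hkn : (k : ℝ) ≤ (n : ℝ) ^ α) :
    (#(fewVertexComplexes (tri0 n) k) : ℝ) * ((n : ℝ) ^ (ε - 1)) ^ k
      ≤ (n : ℝ) ^ (-(1 / 2) : ℝ) * (384 * (n : ℝ) ^ (2 * α + ε - 1 / 2)) ^ k := by
  have hcard : (#(fewVertexComplexes (tri0 n) k) : ℝ)
      ≤ ((k - 1) / 2 + 1 : ℕ) * (n : ℝ) ^ ((k - 1) / 2) * ((k + 3) ^ 3).choose k := by
    exact_mod_cast card_fewVertexComplexes_le (by omega) (card_tri0 hn).le k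
  have hx : (1 : ℝ) ≤ n := Nat.one_le_cast.mpr (by omega)
  set x : ℝ := (n : ℝ)
  set J := (k - 1) / 2
  have hx0 : 0 < x := by positivity
  have hJ : ((J + 1 : ℕ) : ℝ) ≤ 2 ^ k := by
    exact_mod_cast (show J + 1 ≤ k by omega).trans Nat.lt_two_pow_self.le
  have hxJ : x ^ J ≤ x ^ (-(1 / 2) : ℝ) * (x ^ (1 / 2 : ℝ)) ^ k := by
    rw [← Real.rpow_natCast, ← Real.rpow_mul_natCast hx0.le, ← Real.rpow_add hx0]
    refine Real.rpow_le_rpow_of_exponent_le hx ?_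
    have : ((2 * J + 1 : ℕ) : ℝ) ≤ k := by exact_mod_cast (show 2 * J + 1 ≤ k by omega)
    push_cast at this
    linarith
  have hchoose : (((k + 3) ^ 3).choose k : ℝ) ≤ (192 * x ^ (2 * α)) ^ k := by
    refine (Nat.choose_le_exp_one_mul_div_pow _ _).trans (pow_le_pow_left₀ (by positivity) ?_ k)
    have hk0 : (1 : ℝ) ≤ k := by exact_mod_cast hk
    have he : Real.exp 1 ≤ 3 := Real.exp_one_lt_d9.le.trans (by norm_num)
    have hk2 : (k : ℝ) ^ 2 ≤ x ^ (2 * α) := by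
      rw [show 2 * α = α * (2 : ℕ) by push_cast; ring, Real.rpow_mul_natCast hx0.le]
      exact pow_le_pow_left₀ (by positivity) hkn 2
    rw [div_le_iff₀ (by positivity)]
    push_cast
    calc Real.exp 1 * ((k : ℝ) + 3) ^ 3 ≤ 3 * (4 * (k : ℝ)) ^ 3 := by
          gcongr; linarith
      _ = 192 * (k : ℝ) ^ 2 * k := by ring
      _ ≤ 192 * x ^ (2 * α) * k := by gcongr
  calc (#(fewVertexComplexes (tri0 n) k) : ℝ) * (x ^ (ε - 1)) ^ k
      ≤ 2 ^ k * (x ^ (-(1 / 2) : ℝ) * (x ^ (1 / 2 : ℝ)) ^ k) * (192 * x ^ (2 * α)) ^ k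
          * (x ^ (ε - 1)) ^ k := by
        gcongr
        refine hcard.trans ?_
        gcongr
    _ = x ^ (-(1 / 2) : ℝ) * (384 * (x ^ (2 * α) * x ^ (1 / 2 : ℝ) * x ^ (ε - 1))) ^ k := by
        rw [mul_pow 384, show (384 : ℝ) ^ k = 2 ^ k * 192 ^ k by rw [← mul_pow]; norm_num]
        ring
    _ = x ^ (-(1 / 2) : ℝ) * (384 * x ^ (2 * α + ε - 1 / 2)) ^ k := by
        rw [← Real.rpow_add hx0, ← Real.rpow_add hx0]; ring_nf

section LMprob

variable {p : ℝ}

def LMweight (n : ℕ) (p : ℝ) (Y : Finset (Finset (Fin n))) : ℝ :=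
  p ^ #Y * (1 - p) ^ (#(triangles n) - #Y)

lemma LMprob_eq_sum_indicator (A : Set (Finset (Finset (Fin n)))) :
    LMprob n p A = ∑ Y ∈ (triangles n).powerset, A.indicator (LMweight n p) Y := rfl

lemma LMweight_nonneg (hp0 : 0 ≤ p) (hp1 : p ≤ 1) (Y : Finset (Finset (Fin n))) :
    0 ≤ LMweight n p Y :=
  mul_nonneg (pow_nonneg hp0 _) (pow_nonneg (sub_nonneg.mpr hp1) _)

lemma LMprob_nonneg (hp0 : 0 ≤ p) (hp1 : p ≤ 1) (A : Set (Finset (Finset (Fin n)))) :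
    0 ≤ LMprob n p A := by
  rw [LMprob_eq_sum_indicator]
  exact sum_nonneg fun Y _ => Set.indicator_nonneg (fun Y _ => LMweight_nonneg hp0 hp1 Y) Y

lemma LMprob_superset_le (hp0 : 0 ≤ p) (y : Finset (Finset (Fin n))) :
    LMprob n p {Y | y ⊆ Y} ≤ p ^ #y := by
  classical
  set T := triangles n
  have h := sum_indicator_eq_sum_filter T.powerset (fun _ => LMweight n p)
    (fun _ => {Y | y ⊆ Y}) id
  simp only [id, Set.mem_ofPred_eq, ← Icc_eq_filter_powerset] at h
  rw [LMprob_eq_sum_indicator, h]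
  by_cases hyT : y ⊆ T
  · refine le_of_eq ?_
    have hinj : Set.InjOn (y ∪ ·) (T \ y).powerset := fun Z hZ Z' hZ' h => by
      have hd := disjoint_of_subset_left (mem_powerset.mp hZ) sdiff_disjoint
      have hd' := disjoint_of_subset_left (mem_powerset.mp hZ') sdiff_disjoint
      simpa [union_sdiff_cancel_left hd.symm, union_sdiff_cancel_left hd'.symm] using
        congrArg (· \ y) h
    rw [Icc_eq_image_powerset hyT, sum_image hinj]
    calc ∑ Z ∈ (T \ y).powerset, LMweight n p (y ∪ Z)
        = ∑ Z ∈ (T \ y).powerset, p ^ #y * (p ^ #Z * (1 - p) ^ (#(T \ y) - #Z)) :=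
          sum_congr rfl fun Z hZ => by
            have hd := disjoint_of_subset_left (mem_powerset.mp hZ) sdiff_disjoint
            have hZT := card_le_card (mem_powerset.mp hZ)
            rw [card_sdiff_of_subset hyT] at hZT ⊢
            rw [LMweight, card_union_of_disjoint hd.symm, pow_add,
              show #T - (#y + #Z) = #T - #y - #Z by omega]
            ring
      _ = p ^ #y := by rw [← mul_sum, sum_pow_mul_eq_add_pow]; simp
  · rw [Icc_eq_empty hyT, sum_empty]
    positivity

lemma LMprob_le_sum_pow_card (hp0 : 0 ≤ p) (hp1 : p ≤ 1) {A : Set (Finset (Finset (Fin n)))}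
    (S : Finset (Finset (Finset (Fin n)))) (hA : ∀ Y ∈ A, ∃ y ∈ S, y ⊆ Y) :
    LMprob n p A ≤ ∑ y ∈ S, p ^ #y := by
  refine le_trans ?_ (sum_le_sum fun y _ => LMprob_superset_le hp0 y)
  simp only [LMprob_eq_sum_indicator]
  rw [sum_comm]
  refine sum_le_sum fun Y _ => ?_
  have hw := LMweight_nonneg (n := n) hp0 hp1
  by_cases hYA : Y ∈ A
  · obtain ⟨y, hyS, hyY⟩ := hA Y hYA
    rw [Set.indicator_of_mem hYA]
    refine le_trans ?_ (single_le_sum (fun y _ => Set.indicator_nonneg (fun Y _ => hw Y) Y) hyS)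
    rw [Set.indicator_of_mem (show Y ∈ {Y | y ⊆ Y} from hyY)]
  · rw [Set.indicator_of_notMem hYA]
    exact sum_nonneg fun y _ => Set.indicator_nonneg (fun Y _ => hw Y) Y

end LMprob

lemma LMprob_exists_small_filling_le {ε α : ℝ} (hε : ε ≤ 1) (hn : 3 ≤ n)
    (hq : 384 * (n : ℝ) ^ (2 * α + ε - 1 / 2) ≤ 1 / 2) :
    LMprob n ((n : ℝ) ^ (ε - 1)) {Y | ∃ y ⊆ Y, (#y : ℝ) < (n : ℝ) ^ α ∧ IsFilling y (tri0 n)}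
      ≤ 2 * (n : ℝ) ^ (-(1 / 2) : ℝ) := by
  set p := (n : ℝ) ^ (ε - 1)
  set K := ⌊(n : ℝ) ^ α⌋₊
  have hx : (1 : ℝ) ≤ n := Nat.one_le_cast.mpr (by omega)
  have hp0 : 0 ≤ p := by positivity
  have hp1 : p ≤ 1 := Real.rpow_le_one_of_one_le_of_nonpos hx (by linarith)
  have hτ := card_tri0 hn
  have hdisj : ((Icc 1 K : Finset ℕ) : Set ℕ).PairwiseDisjoint (fewVertexComplexes (tri0 n)) :=
    fun k _ l _ hkl => disjoint_left.mpr fun y hk hl =>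
      hkl ((card_of_mem_fewVertexComplexes hk).symm.trans (card_of_mem_fewVertexComplexes hl))
  calc LMprob n p {Y | ∃ y ⊆ Y, (#y : ℝ) < (n : ℝ) ^ α ∧ IsFilling y (tri0 n)}
      ≤ ∑ y ∈ (Icc 1 K).biUnion (fewVertexComplexes (tri0 n)), p ^ #y := by
        refine LMprob_le_sum_pow_card hp0 hp1 _ fun Y ⟨y, hyY, hyα, hy⟩ => ?_
        obtain ⟨x, hxy, hx⟩ := hy.exists_isMinimalFilling
        refine ⟨x, mem_biUnion.mpr ⟨#x, mem_Icc.mpr ⟨card_pos.mpr (hx.1.nonempty (by omega)),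
          Nat.le_floor ((Nat.cast_le.mpr (card_le_card hxy)).trans hyα.le)⟩,
          hx.mem_fewVertexComplexes hτ⟩, hxy.trans hyY⟩
    _ = ∑ k ∈ Icc 1 K, (#(fewVertexComplexes (tri0 n) k) : ℝ) * p ^ k := by
        rw [sum_biUnion hdisj]
        refine sum_congr rfl fun k _ => ?_
        rw [sum_congr rfl fun y hy => by rw [card_of_mem_fewVertexComplexes hy], sum_const,
          nsmul_eq_mul]
    _ ≤ ∑ k ∈ Icc 1 K, (n : ℝ) ^ (-(1 / 2) : ℝ) * (384 * (n : ℝ) ^ (2 * α + ε - 1 / 2)) ^ k :=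
        sum_le_sum fun k hk => card_fewVertexComplexes_mul_pow_le hn (mem_Icc.mp hk).1
          ((Nat.cast_le.mpr (mem_Icc.mp hk).2).trans (Nat.floor_le (by positivity)))
    _ ≤ 2 * (n : ℝ) ^ (-(1 / 2) : ℝ) := by
        rw [← mul_sum, mul_comm]
        exact mul_le_mul_of_nonneg_right (sum_Icc_pow_le_two (by positivity) hq K)
          (by positivity)

end Fillings

theorem stmt6_general (ε α : ℝ) (hα : 0 < α) (hsmall : 2 * α + ε < 1 / 2) :
    Filter.Tendsto
      (fun n : ℕ => LMprob n ((n : ℝ) ^ (ε - 1))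
        {Y | ∃ y ⊆ Y, (y.card : ℝ) < (n : ℝ) ^ α ∧ IsFilling y (tri0 n)})
      Filter.atTop (nhds 0) := by
  have hq : ∀ᶠ n : ℕ in Filter.atTop, 384 * (n : ℝ) ^ (2 * α + ε - 1 / 2) ≤ 1 / 2 := by
    have h := (tendsto_natCast_rpow_atTop_nhds_zero (by linarith : 2 * α + ε - 1 / 2 < 0)).const_mul
      (384 : ℝ)
    rw [mul_zero] at h
    exact h.eventually (ge_mem_nhds (by norm_num))
  have hdecay :
      Filter.Tendsto (fun n : ℕ => 2 * (n : ℝ) ^ (-(1 / 2) : ℝ)) Filter.atTop (nhds 0) := by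
    simpa using
      (tendsto_natCast_rpow_atTop_nhds_zero (by norm_num : (-(1 / 2) : ℝ) < 0)).const_mul 2
  refine squeeze_zero' ?_ ?_ hdecay
  · filter_upwards [Filter.eventually_ge_atTop 1] with n hn
    exact LMprob_nonneg (by positivity)
      (Real.rpow_le_one_of_one_le_of_nonpos (Nat.one_le_cast.mpr hn) (by linarith)) _
  · filter_upwards [Filter.eventually_ge_atTop 3, hq] with n hn hqn
    exact LMprob_exists_small_filling_le (by linarith) hn hqn

theorem stmt6 (ε α : ℝ) (hε : 0 < ε) (hα : 0 < α) (hsmall : 2 * α + ε < 1 / 2) :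
    Filter.Tendsto
      (fun n : ℕ => LMprob n ((n : ℝ) ^ (ε - 1))
        {Y | ∃ y ⊆ Y, (y.card : ℝ) < (n : ℝ) ^ α ∧ IsFilling y (tri0 n)})
      Filter.atTop (nhds 0) :=
  stmt6_general ε α hα hsmall
end

section
/- Let ε > 0 and α > 0 satisfy 2α + ε < 1/2, and set p(n) = n^{ε−1}. For a subset Y of T_n and a triangle τ, let T_Y(τ) denote the minimum of n^α and the minimal cardinality of a ℤ/2-filling y ⊆ Y of τ (taken to be n^α if no such filling exists). Then there is a constant c > 0 such that the probability under the Linial–Meshulam distribution Y_{n,p(n)} of the event that Σ_τ T_Y(τ)² ≥ c·n^{3+2α}, the sum running over all triangles τ of Fin n, tends to 1 as n → ∞. -/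
open Finset

-- `T_Y(τ)`: the minimum of `n^α` and the minimal cardinality of a ℤ/2-filling `y ⊆ Y` of `τ`
-- (taken to be `n^α` if no such filling exists).
open Classical in
noncomputable def TY (n : ℕ) (α : ℝ) (Y : Finset (Finset (Fin n))) (τ : Finset (Fin n)) : ℝ :=
  if ∃ y ⊆ Y, IsFilling y τ then
    min ((n : ℝ) ^ α) ((sInf {m : ℕ | ∃ y ⊆ Y, IsFilling y τ ∧ y.card = m} : ℕ) : ℝ)
  else (n : ℝ) ^ α

/-!
Call a filling small if it has fewer than `n ^ α` faces. Triangles without a small filling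
contribute `n ^ (2α)` each, so the sum is at least `n ^ (3 + 2α) / 48` unless half of the
`C(n, 3)` triangles have one; by Markov's inequality it suffices that each triangle has a small
filling with probability `o(1)`.

If `τ ∉ Y` and `y ⊆ Y` is a minimum filling of `τ`, then `z = y ∪ {τ}` is a mod-2 cycle with no
proper nonempty subcycle. Its mod-2 homology has `b₀ = b₂ = 1`, so its Euler characteristic is at
most `2`; with `2 |E| ≤ 3 |z|` this leaves at most `(|z| + 4) / 2` vertices. Growing `z` face by
face from `τ`, each new face sharing an edge with an earlier one, encodes `z` by one of at most
`n ^ ((k - 2) / 2) (6 k²) ^ (k - 1)` codes (`k = |z| ≤ n ^ α`), and each code's `k - 1` faces lie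
in `Y` with probability `p ^ (k - 1)`. For `p = n ^ (ε - 1)` the union bound is a geometric series
of ratio `O(n ^ (2α + ε - 1/2))`, and it sums to `O(n ^ (2α + ε - 1))`.
-/

namespace LinialMeshulam

theorem sum_Icc_pow_mul_one_sub_pow {α R : Type*} [DecidableEq α] [CommRing R] {S T : Finset α}
    (h : S ⊆ T) (p : R) : ∑ t ∈ Icc S T, p ^ #t * (1 - p) ^ (#T - #t) = p ^ #S := by
  have hdisj : ∀ u ∈ (T \ S).powerset, Disjoint S u := fun u hu =>
    disjoint_of_subset_right (mem_powerset.1 hu) disjoint_sdiff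
  rw [Icc_eq_image_powerset h, sum_image fun u hu v hv huv => by
    rw [← union_sdiff_cancel_left (hdisj u hu), huv, union_sdiff_cancel_left (hdisj v hv)]]
  calc ∑ u ∈ (T \ S).powerset, p ^ #(S ∪ u) * (1 - p) ^ (#T - #(S ∪ u))
      = ∑ u ∈ (T \ S).powerset, p ^ #S * (p ^ #u * (1 - p) ^ (#(T \ S) - #u)) :=
        sum_congr rfl fun u hu => by
          rw [card_union_of_disjoint (hdisj u hu), card_sdiff_of_subset h, pow_add, mul_assoc,
            Nat.sub_add_eq]
    _ = p ^ #S := by rw [← mul_sum, sum_pow_mul_eq_add_pow, add_sub_cancel, one_pow, mul_one]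

section Probability

variable {n : ℕ} {p : ℝ}

noncomputable def weight (n : ℕ) (p : ℝ) (Y : Finset (Finset (Fin n))) : ℝ :=
  p ^ #Y * (1 - p) ^ (#(triangles n) - #Y)

noncomputable def expect (n : ℕ) (p : ℝ) : (Finset (Finset (Fin n)) → ℝ) →ₗ[ℝ] ℝ where
  toFun g := ∑ Y ∈ (triangles n).powerset, weight n p Y * g Y
  map_add' g h := by simp only [Pi.add_apply, mul_add, sum_add_distrib]
  map_smul' c g := by
    simp only [Pi.smul_apply, smul_eq_mul, RingHom.id_apply, mul_sum, mul_left_comm]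

theorem expect_apply (g : Finset (Finset (Fin n)) → ℝ) :
    expect n p g = ∑ Y ∈ (triangles n).powerset, weight n p Y * g Y := rfl

open Classical in
theorem LMprob_eq_expect (A : Set (Finset (Finset (Fin n)))) :
    LMprob n p A = expect n p (A.indicator 1) :=
  sum_congr rfl fun Y _ => by simp [Set.indicator_apply, weight]

theorem weight_nonneg (hp₀ : 0 ≤ p) (hp₁ : p ≤ 1) (Y : Finset (Finset (Fin n))) :
    0 ≤ weight n p Y :=
  mul_nonneg (pow_nonneg hp₀ _) (pow_nonneg (sub_nonneg.2 hp₁) _)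

theorem expect_mono (hp₀ : 0 ≤ p) (hp₁ : p ≤ 1) {g h : Finset (Finset (Fin n)) → ℝ} (hgh : g ≤ h) :
    expect n p g ≤ expect n p h := by
  rw [expect_apply, expect_apply]
  exact sum_le_sum fun Y _ => mul_le_mul_of_nonneg_left (hgh Y) (weight_nonneg hp₀ hp₁ Y)

theorem expect_const (c : ℝ) : expect n p (fun _ => c) = c := by
  change ∑ Y ∈ (triangles n).powerset, weight n p Y * c = c
  rw [← sum_mul]
  simp only [weight, sum_pow_mul_eq_add_pow, add_sub_cancel, one_pow, one_mul]

theorem LMprob_mono (hp₀ : 0 ≤ p) (hp₁ : p ≤ 1) {A B : Set (Finset (Finset (Fin n)))}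
    (h : A ⊆ B) : LMprob n p A ≤ LMprob n p B := by
  rw [LMprob_eq_expect, LMprob_eq_expect]
  exact expect_mono hp₀ hp₁ (Set.indicator_le_indicator_of_subset h fun _ => zero_le_one)

theorem LMprob_le_one (hp₀ : 0 ≤ p) (hp₁ : p ≤ 1) (A : Set (Finset (Finset (Fin n)))) :
    LMprob n p A ≤ 1 := by
  rw [LMprob_eq_expect, ← expect_const (n := n) (p := p) 1]
  exact expect_mono hp₀ hp₁ (Set.indicator_le_self' fun _ _ => zero_le_one)

theorem one_le_LMprob_add (hp₀ : 0 ≤ p) (hp₁ : p ≤ 1) {A B : Set (Finset (Finset (Fin n)))}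
    (h : ∀ Y, Y ∈ A ∨ Y ∈ B) : 1 ≤ LMprob n p A + LMprob n p B := by
  rw [LMprob_eq_expect, LMprob_eq_expect, ← map_add, ← expect_const (n := n) (p := p) 1]
  refine expect_mono hp₀ hp₁ fun Y => ?_
  rcases h Y with hY | hY <;> simp [hY, Set.indicator_nonneg]

theorem LMprob_le_add (hp₀ : 0 ≤ p) (hp₁ : p ≤ 1) {A B C : Set (Finset (Finset (Fin n)))}
    (h : A ⊆ B ∪ C) : LMprob n p A ≤ LMprob n p B + LMprob n p C := by
  classical
  rw [LMprob_eq_expect, LMprob_eq_expect, LMprob_eq_expect, ← map_add]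
  refine expect_mono hp₀ hp₁ fun Y => ?_
  have hY := @h Y
  simp only [Set.indicator_apply, Pi.add_apply, Pi.one_apply, Set.mem_union] at hY ⊢
  split_ifs <;> simp_all

theorem LMprob_le_sum (hp₀ : 0 ≤ p) (hp₁ : p ≤ 1) {ι : Type*} {I : Finset ι}
    {A : Set (Finset (Finset (Fin n)))} {E : ι → Set (Finset (Finset (Fin n)))}
    (h : A ⊆ ⋃ i ∈ I, E i) : LMprob n p A ≤ ∑ i ∈ I, LMprob n p (E i) := by
  simp only [LMprob_eq_expect, ← map_sum]
  refine expect_mono hp₀ hp₁ fun Y => ?_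
  by_cases hY : Y ∈ A
  · obtain ⟨i, hi, hYi⟩ := Set.mem_iUnion₂.1 (h hY)
    rw [Set.indicator_of_mem hY, Finset.sum_apply]
    exact (Set.indicator_of_mem hYi (1 : Finset (Finset (Fin n)) → ℝ)).symm.le.trans
      (single_le_sum (fun j _ => Set.indicator_nonneg (fun _ _ => zero_le_one) Y) hi)
  · rw [Set.indicator_of_notMem hY, Finset.sum_apply]
    exact sum_nonneg fun j _ => Set.indicator_nonneg (fun _ _ => zero_le_one) Y

theorem mul_LMprob_le_expect (hp₀ : 0 ≤ p) (hp₁ : p ≤ 1) {g : Finset (Finset (Fin n)) → ℝ}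
    (hg : 0 ≤ g) (a : ℝ) : a * LMprob n p {Y | a ≤ g Y} ≤ expect n p g := by
  rw [LMprob_eq_expect, ← smul_eq_mul, ← map_smul]
  refine expect_mono hp₀ hp₁ fun Y => ?_
  by_cases hY : a ≤ g Y
  · simp [hY]
  · simpa [Set.indicator_apply, hY] using hg Y

open Classical in
theorem LMprob_two_mul_card_filter_ge_le (hp₀ : 0 ≤ p) (hp₁ : p ≤ 1) {ι : Type*} {s : Finset ι}
    (hs : s.Nonempty) {E : ι → Set (Finset (Finset (Fin n)))} {q : ℝ}
    (hE : ∀ i ∈ s, LMprob n p (E i) ≤ q) :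
    LMprob n p {Y | #s ≤ 2 * #{i ∈ s | Y ∈ E i}} ≤ 2 * q := by
  set X := ∑ i ∈ s, (E i).indicator (1 : Finset (Finset (Fin n)) → ℝ)
  have hX : ∀ Y, X Y = #{i ∈ s | Y ∈ E i} := fun Y => by
    simp [X, Finset.sum_apply, Set.indicator_apply]
  have hmean : expect n p X ≤ #s * q := by
    rw [map_sum, ← nsmul_eq_mul, ← sum_const]
    exact sum_le_sum fun i hi => (LMprob_eq_expect (E i)).symm.le.trans (hE i hi)
  have hevent : {Y | #s ≤ 2 * #{i ∈ s | Y ∈ E i}} = {Y | (#s : ℝ) / 2 ≤ X Y} := by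
    ext Y
    rw [Set.mem_ofPred_eq, Set.mem_ofPred_eq, hX, div_le_iff₀' two_pos]
    exact_mod_cast Iff.rfl
  have hmarkov := mul_LMprob_le_expect hp₀ hp₁ (g := X)
    (fun Y => by rw [hX]; exact Nat.cast_nonneg _) ((#s : ℝ) / 2)
  have hs₀ : (0 : ℝ) < #s := by exact_mod_cast hs.card_pos
  rw [hevent]
  nlinarith

theorem LMprob_superset_le (hp₀ : 0 ≤ p) (S : Finset (Finset (Fin n))) :
    LMprob n p {Y | S ⊆ Y} ≤ p ^ #S := by
  classical
  have hsum : LMprob n p {Y | S ⊆ Y} = ∑ Y ∈ Icc S (triangles n), weight n p Y := by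
    rw [Icc_eq_filter_powerset, sum_filter]
    exact sum_congr rfl fun Y _ => by simp [weight]
  by_cases hS : S ⊆ triangles n
  · rw [hsum]
    exact (sum_Icc_pow_mul_one_sub_pow hS p).le
  · rw [hsum, Icc_eq_empty hS, sum_empty]
    exact pow_nonneg hp₀ _

end Probability

section Cycles

variable {α : Type*} [DecidableEq α] {z z' : Finset (Finset α)}

def IsCycle (z : Finset (Finset α)) : Prop :=
  ∀ e : Finset α, #e = 2 → Even #{f ∈ z | e ⊆ f}

def IsIrreducible (z : Finset (Finset α)) : Prop :=
  ∀ z' ⊆ z, IsCycle z' → z' = ∅ ∨ z' = z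

theorem IsCycle.sdiff (hz : IsCycle z) (hz' : IsCycle z') (h : z' ⊆ z) : IsCycle (z \ z') := by
  intro e he
  have hfilter : {f ∈ z \ z' | e ⊆ f} = {f ∈ z | e ⊆ f} \ {f ∈ z' | e ⊆ f} := by
    ext f
    simp only [mem_filter, mem_sdiff]
    tauto
  rw [hfilter, card_sdiff_of_subset (filter_subset_filter _ h)]
  exact (hz e he).tsub (hz' e he)

/-- Otherwise `S` would be a proper nonempty subcycle. -/
theorem IsIrreducible.exists_shared_edge (hz : IsCycle z) (hirr : IsIrreducible z)
    {S : Finset (Finset α)} (hSz : S ⊆ z) (hne : S.Nonempty) (hS : S ≠ z) :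
    ∃ a ∈ S, ∃ b ∈ z, b ∉ S ∧ ∃ e : Finset α, #e = 2 ∧ e ⊆ a ∧ e ⊆ b := by
  by_contra! h
  have hS_cycle : IsCycle S := by
    intro e he
    by_cases hea : ∃ a ∈ S, e ⊆ a
    · obtain ⟨a, ha, hea⟩ := hea
      have hfilter : {f ∈ S | e ⊆ f} = {f ∈ z | e ⊆ f} := by
        ext f
        simp only [mem_filter]
        exact ⟨fun ⟨hf, hef⟩ => ⟨hSz hf, hef⟩, fun ⟨hf, hef⟩ =>
          ⟨by_contra fun hfS => h a ha f hf hfS e he hea hef, hef⟩⟩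
      rw [hfilter]
      exact hz e he
    · rw [filter_false_of_mem fun a ha hea' => hea ⟨a, ha, hea'⟩, card_empty]
      exact ⟨0, rfl⟩
  rcases hirr S hSz hS_cycle with rfl | rfl
  · exact not_nonempty_empty hne
  · exact hS rfl

def edges (z : Finset (Finset α)) : Finset (Finset α) := z.biUnion (powersetCard 2)

def vertices (z : Finset (Finset α)) : Finset α := z.biUnion id

theorem mem_edges {e : Finset α} : e ∈ edges z ↔ ∃ f ∈ z, e ⊆ f ∧ #e = 2 := by
  simp [edges, mem_powersetCard]

theorem mem_vertices {v : α} : v ∈ vertices z ↔ ∃ f ∈ z, v ∈ f := by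
  simp [vertices]

theorem two_mul_card_edges_le (hz : IsCycle z) (h3 : ∀ f ∈ z, #f = 3) :
    2 * #(edges z) ≤ 3 * #z := by
  rw [mul_comm 2, mul_comm 3]
  refine card_mul_le_card_mul (· ⊆ ·) (fun e he => ?_) (fun f hf => ?_)
  · obtain ⟨f, hf, hef, he2⟩ := mem_edges.1 he
    have hpos : 0 < #{f ∈ z | e ⊆ f} := card_pos.2 ⟨f, mem_filter.2 ⟨hf, hef⟩⟩
    obtain ⟨m, hm⟩ := hz e he2
    change 2 ≤ #{f ∈ z | e ⊆ f}
    omega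
  · calc #(bipartiteBelow (· ⊆ ·) (edges z) f) ≤ #(powersetCard 2 f) :=
          card_le_card fun e he => by
            obtain ⟨he, hef⟩ := mem_filter.1 he
            obtain ⟨-, -, -, he2⟩ := mem_edges.1 he
            exact mem_powersetCard.2 ⟨hef, he2⟩
      _ = 3 := by rw [card_powersetCard, h3 f hf]; rfl

end Cycles

section Boundary

open Matrix

theorem card_le_rank_add_one_of_mulVec_eq_zero {m ι K : Type*} [Fintype m] [Fintype ι] [Field K]
    (M : Matrix m ι K) (h : ∀ x, M *ᵥ x = 0 → ∃ c, x = fun _ => c) :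
    Fintype.card ι ≤ M.rank + 1 := by
  have hker : LinearMap.ker M.mulVecLin ≤ Submodule.span K {fun _ => 1} := fun x hx => by
    obtain ⟨c, rfl⟩ := h x hx
    exact Submodule.mem_span_singleton.2 ⟨c, funext fun _ => mul_one c⟩
  have hker₁ : Module.finrank K (LinearMap.ker M.mulVecLin) ≤ 1 :=
    (Submodule.finrank_mono hker).trans ((finrank_span_le_card _).trans (by simp))
  have := LinearMap.finrank_range_add_finrank_ker M.mulVecLin
  rw [Module.finrank_fintype_fun_eq_card] at this
  rw [Matrix.rank]
  omega

variable {α : Type*} [DecidableEq α] {z : Finset (Finset α)}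

theorem zmod_two_eq_zero_or_eq_one (a : ZMod 2) : a = 0 ∨ a = 1 := by
  revert a; decide

def faceBoundary (z : Finset (Finset α)) : Matrix (edges z) z (ZMod 2) :=
  Matrix.of fun e f => if (e : Finset α) ⊆ f then 1 else 0

def edgeBoundary (z : Finset (Finset α)) : Matrix (vertices z) (edges z) (ZMod 2) :=
  Matrix.of fun v e => if (v : α) ∈ (e : Finset α) then 1 else 0

theorem card_filter_mem_powersetCard_two {f : Finset α} (hf : #f = 3) {v : α} (hv : v ∈ f) :
    #{e ∈ powersetCard 2 f | v ∈ e} = 2 := by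
  have hnot : {e ∈ powersetCard 2 f | v ∉ e} = powersetCard 2 (f.erase v) := by
    ext e
    simp only [mem_filter, mem_powersetCard, subset_erase]
    tauto
  have := card_filter_add_card_filter_not (s := powersetCard 2 f) (fun e => v ∈ e)
  rw [hnot, card_powersetCard, card_powersetCard, card_erase_of_mem hv, hf] at this
  simpa using this

theorem edgeBoundary_mul_faceBoundary (h3 : ∀ f ∈ z, #f = 3) :
    edgeBoundary z * faceBoundary z = 0 := by
  ext v f
  have hcount : {e ∈ edges z | (v : α) ∈ e ∧ e ⊆ (f : Finset α)}
      = {e ∈ powersetCard 2 (f : Finset α) | (v : α) ∈ e} := by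
    ext e
    simp only [mem_filter, mem_edges, mem_powersetCard]
    exact ⟨fun ⟨⟨_, _, _, he⟩, hv, hef⟩ => ⟨⟨hef, he⟩, hv⟩,
      fun ⟨⟨hef, he⟩, hv⟩ => ⟨⟨f, f.2, hef, he⟩, hv, hef⟩⟩
  have hsum : (edgeBoundary z * faceBoundary z) v f
      = #{e ∈ edges z | (v : α) ∈ e ∧ e ⊆ (f : Finset α)} := by
    simp only [Matrix.mul_apply, edgeBoundary, faceBoundary, Matrix.of_apply, ite_mul, one_mul,
      zero_mul, ← ite_and]
    rw [← sum_boole, ← sum_coe_sort (edges z)]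
  rw [hsum, hcount, Matrix.zero_apply]
  by_cases hv : (v : α) ∈ (f : Finset α)
  · rw [card_filter_mem_powersetCard_two (h3 f f.2) hv]
    rfl
  · rw [filter_false_of_mem fun e he hve => hv ((mem_powersetCard.1 he).1 hve)]
    rfl

theorem faceBoundary_mulVec_eq_zero (hirr : IsIrreducible z)
    (x : z → ZMod 2) (hx : faceBoundary z *ᵥ x = 0) : ∃ c, x = fun _ => c := by
  set z' := ({f | x f = 1} : Finset z).map (Function.Embedding.subtype _)
  have hmem : ∀ f : z, (f : Finset α) ∈ z' ↔ x f = 1 := by simp [z']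
  have hz' : z' ⊆ z := fun f hf => by
    obtain ⟨g, -, rfl⟩ := mem_map.1 hf
    exact g.2
  have hcount : ∀ e : edges z,
      (faceBoundary z *ᵥ x) e = (#{f ∈ z' | (e : Finset α) ⊆ f} : ZMod 2) := fun e => by
    rw [filter_map, card_map, filter_filter, ← sum_boole]
    refine sum_congr rfl fun f _ => ?_
    rcases zmod_two_eq_zero_or_eq_one (x f) with h | h <;>
      simp [faceBoundary, h]
  have hcycle : IsCycle z' := by
    intro e he
    by_cases heE : e ∈ edges z
    · have := hcount ⟨e, heE⟩
      rw [hx, Pi.zero_apply, eq_comm, ZMod.natCast_eq_zero_iff_even] at this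
      exact this
    · rw [filter_false_of_mem fun f hf hef => heE (mem_edges.2 ⟨f, hz' hf, hef, he⟩), card_empty]
      exact ⟨0, rfl⟩
  rcases hirr z' hz' hcycle with h | h
  · refine ⟨0, funext fun f => ?_⟩
    have : x f ≠ 1 := fun h1 => by simpa [h] using (hmem f).2 h1
    rcases zmod_two_eq_zero_or_eq_one (x f) with h0 | h1
    · exact h0
    · exact absurd h1 this
  · exact ⟨1, funext fun f => (hmem f).1 (by rw [h]; exact f.2)⟩

theorem eq_of_edgeBoundary_transpose_mulVec_eq_zero {x : vertices z → ZMod 2}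
    (hx : (edgeBoundary z)ᵀ *ᵥ x = 0) {f : Finset α} (hf : f ∈ z) {u w : vertices z}
    (hu : (u : α) ∈ f) (hw : (w : α) ∈ f) : x u = x w := by
  by_cases huw : u = w
  · rw [huw]
  have hne : (u : α) ≠ w := fun h => huw (Subtype.ext h)
  have he : ({(u : α), (w : α)} : Finset α) ∈ edges z :=
    mem_edges.2 ⟨f, hf, insert_subset hu (singleton_subset_iff.2 hw), card_pair hne⟩
  have hrow := congrFun hx ⟨_, he⟩
  rw [mulVec, dotProduct, Fintype.sum_eq_add u w huw fun v hv => ?_] at hrow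
  · simp only [transpose_apply, edgeBoundary, of_apply, mem_insert, mem_singleton, true_or,
      or_true, if_true, one_mul, Pi.zero_apply] at hrow
    rw [eq_neg_of_add_eq_zero_left hrow, ZMod.neg_eq_self_mod_two]
  · have : (v : α) ∉ ({(u : α), (w : α)} : Finset α) := by
      simp only [mem_insert, mem_singleton, not_or]
      exact ⟨fun h => hv.1 (Subtype.ext h), fun h => hv.2 (Subtype.ext h)⟩
    simp [edgeBoundary, this]

theorem edgeBoundary_transpose_mulVec_eq_zero (hz : IsCycle z) (hirr : IsIrreducible z)
    (x : vertices z → ZMod 2) (hx : (edgeBoundary z)ᵀ *ᵥ x = 0) : ∃ c, x = fun _ => c := by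
  rcases isEmpty_or_nonempty (vertices z) with h | ⟨⟨v₀⟩⟩
  · exact ⟨0, funext fun v => isEmptyElim v⟩
  obtain ⟨f₀, hf₀, hv₀⟩ := mem_vertices.1 v₀.2
  set S := {f ∈ z | ∀ v : vertices z, (v : α) ∈ f → x v = x v₀}
  have hS : S = z := by
    by_contra hSz
    obtain ⟨a, ha, b, hb, hbS, e, he, hea, heb⟩ := hirr.exists_shared_edge hz (filter_subset _ _)
      ⟨f₀, mem_filter.2 ⟨hf₀, fun v hv =>
        eq_of_edgeBoundary_transpose_mulVec_eq_zero hx hf₀ hv hv₀⟩⟩ hSz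
    obtain ⟨m, hm⟩ := card_pos.1 (by omega : 0 < #e)
    have hmV : m ∈ vertices z := mem_vertices.2 ⟨b, hb, heb hm⟩
    refine hbS (mem_filter.2 ⟨hb, fun v hv => ?_⟩)
    rw [eq_of_edgeBoundary_transpose_mulVec_eq_zero hx hb (w := ⟨m, hmV⟩) hv (heb hm)]
    exact (mem_filter.1 ha).2 _ (hea hm)
  refine ⟨x v₀, funext fun v => ?_⟩
  obtain ⟨f, hf, hvf⟩ := mem_vertices.1 v.2
  rw [← hS] at hf
  exact (mem_filter.1 hf).2 v hvf

/-- Euler characteristic bound: `b₀ = b₂ = 1` gives `#V - #E + #z ≤ 2`, and `2 #E ≤ 3 #z`. -/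
theorem two_mul_card_vertices_le (hz : IsCycle z) (hirr : IsIrreducible z)
    (h3 : ∀ f ∈ z, #f = 3) : 2 * #(vertices z) ≤ #z + 4 := by
  have h₂ := card_le_rank_add_one_of_mulVec_eq_zero _ (faceBoundary_mulVec_eq_zero hirr)
  have h₁ := card_le_rank_add_one_of_mulVec_eq_zero _
    (edgeBoundary_transpose_mulVec_eq_zero hz hirr)
  have h₁₂ := Matrix.rank_add_rank_le_card_of_mul_eq_zero (edgeBoundary_mul_faceBoundary h3)
  have hE := two_mul_card_edges_le hz h3
  rw [Matrix.rank_transpose] at h₁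
  simp only [Fintype.card_coe] at h₁ h₂ h₁₂
  omega

end Boundary

section Filling

variable {n : ℕ} {y w : Finset (Finset (Fin n))} {τ : Finset (Fin n)}

theorem card_filter_insert_of_notMem (hτ : τ ∉ y) (e : Finset (Fin n)) :
    #{f ∈ insert τ y | e ⊆ f} = #{f ∈ y | e ⊆ f} + if e ⊆ τ then 1 else 0 := by
  rw [filter_insert]
  split_ifs
  · exact card_insert_of_notMem fun h => hτ (mem_filter.1 h).1
  · rfl

theorem IsFilling.isCycle_insert (h : IsFilling y τ) (hτ : τ ∉ y) : IsCycle (insert τ y) := by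
  intro e he
  have := h.2 e he
  rw [card_filter_insert_of_notMem hτ, Nat.even_iff]
  split_ifs at this ⊢ <;> omega

theorem IsCycle.isFilling_erase (hw : IsCycle w) (hτ : τ ∈ w) (h3 : ∀ f ∈ w.erase τ, #f = 3) :
    IsFilling (w.erase τ) τ := by
  refine ⟨h3, fun e he => ?_⟩
  have := hw e he
  rw [← insert_erase hτ, card_filter_insert_of_notMem (notMem_erase τ w), Nat.even_iff] at this
  split_ifs at this ⊢ <;> omega

/-- A filling of minimum size, together with `τ`, is an irreducible cycle: a subcycle through `τ`
would give a smaller filling, and the complement of one avoiding `τ` would too. -/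
theorem isIrreducible_insert_of_minimal (hτ : τ ∉ y) (hfill : IsFilling y τ)
    (hmin : ∀ y' ⊆ y, IsFilling y' τ → #y ≤ #y') : IsIrreducible (insert τ y) := by
  have hthrough : ∀ w ⊆ insert τ y, IsCycle w → τ ∈ w → w = insert τ y := by
    intro w hw hcyc hτw
    have hwy : w.erase τ ⊆ y := fun f hf => by
      obtain ⟨hfτ, hfw⟩ := mem_erase.1 hf
      exact (mem_insert.1 (hw hfw)).resolve_left hfτ
    have hy := eq_of_subset_of_card_le hwy
      (hmin _ hwy (hcyc.isFilling_erase hτw fun f hf => hfill.1 f (hwy hf)))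
    rw [← hy, insert_erase hτw]
  intro z' hz' hcyc
  by_cases hτz' : τ ∈ z'
  · exact Or.inr (hthrough z' hz' hcyc hτz')
  · have hsdiff := hthrough _ sdiff_subset ((IsFilling.isCycle_insert hfill hτ).sdiff hcyc hz')
      (mem_sdiff.2 ⟨mem_insert_self τ y, hτz'⟩)
    refine Or.inl (eq_empty_of_forall_notMem fun f hf => ?_)
    have : f ∈ insert τ y \ z' := by rw [hsdiff]; exact hz' hf
    exact (mem_sdiff.1 this).2 hf

end Filling

section Encoding

variable {α : Type*} [DecidableEq α] [Inhabited α]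

def maxVertices (k : ℕ) : ℕ := (k + 4) / 2

/-- Describes `k` faces grown one at a time from a given first face: labels for the vertices
outside the first face, and for each further face the position of an earlier face, the position
of the vertex of that face to drop, and the position of the vertex to add. -/
abbrev Code (α : Type*) (k : ℕ) : Type _ :=
  (Fin (maxVertices k - 3) → α) × List.Vector (Fin k × Fin 3 × Fin (maxVertices k)) (k - 1)

noncomputable def vertexList (τ : Finset α) {m : ℕ} (L : Fin m → α) : List α :=
  τ.toList ++ List.ofFn L

noncomputable def extend {k m : ℕ} (verts : List α) (faces : List (Finset α))
    (s : Fin k × Fin 3 × Fin m) : List (Finset α) :=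
  let f := faces.getD s.1 ∅
  faces ++ [insert (verts.getD s.2.2 default) (f.erase (f.toList.getD s.2.1 default))]

noncomputable def decode {k : ℕ} (τ : Finset α) (c : Code α k) : Finset (Finset α) :=
  (c.2.toList.foldl (extend (vertexList τ c.1)) [τ]).toFinset

theorem exists_extend_eq {k m : ℕ} {verts : List α} {faces : List (Finset α)} {a b e : Finset α}
    (ha : a ∈ faces) (hk : faces.length ≤ k) (hm : verts.length ≤ m) (ha3 : #a = 3)
    (hb3 : #b = 3) (he : #e = 2) (hea : e ⊆ a) (heb : e ⊆ b) (hb : ∀ u ∈ b, u ∈ verts) :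
    ∃ s : Fin k × Fin 3 × Fin m, extend verts faces s = faces ++ [b] := by
  obtain ⟨x, hxe, hxa⟩ := exists_eq_insert_iff.2 ⟨hea, by omega⟩
  obtain ⟨u, hue, hub⟩ := exists_eq_insert_iff.2 ⟨heb, by omega⟩
  obtain ⟨j, hj, hja⟩ := List.mem_iff_getElem.1 ha
  obtain ⟨t, ht, htx⟩ := List.mem_iff_getElem.1 (mem_toList.2 (hxa ▸ mem_insert_self x e))
  obtain ⟨i, hi, hiu⟩ := List.mem_iff_getElem.1 (hb u (hub ▸ mem_insert_self u e))
  rw [length_toList] at ht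
  refine ⟨(⟨j, by omega⟩, ⟨t, by omega⟩, ⟨i, by omega⟩), ?_⟩
  simp only [extend, List.getD_eq_getElem _ _ hj, List.getD_eq_getElem _ _ hi, hja, hiu,
    List.getD_eq_getElem _ _ (by rwa [length_toList] : t < a.toList.length), htx]
  rw [← hxa, erase_insert hxe, hub]

theorem length_foldl_extend {k m : ℕ} (verts : List α) (s : List (Fin k × Fin 3 × Fin m))
    (faces : List (Finset α)) :
    (s.foldl (extend verts) faces).length = faces.length + s.length := by
  induction s generalizing faces with
  | nil => rfl
  | cons x s ih => simp only [List.foldl_cons, ih, extend, List.length_append]; simp; omega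

variable {z : Finset (Finset α)} {τ : Finset α}

/-- The faces of an irreducible cycle can be listed, starting from any of them, so that each
shares an edge with an earlier one. -/
theorem exists_foldl_extend (hz : IsCycle z) (hirr : IsIrreducible z) (h3 : ∀ f ∈ z, #f = 3)
    (hτ : τ ∈ z) {m : ℕ} {verts : List α} (hm : verts.length ≤ m)
    (hverts : ∀ u ∈ vertices z, u ∈ verts) (j : ℕ) (hj : j < #z) :
    ∃ s : List (Fin #z × Fin 3 × Fin m), s.length = j ∧ (s.foldl (extend verts) [τ]).Nodup ∧
      τ ∈ s.foldl (extend verts) [τ] ∧ ∀ f ∈ s.foldl (extend verts) [τ], f ∈ z := by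
  induction j with
  | zero => exact ⟨[], rfl, List.nodup_singleton τ, List.mem_singleton_self τ, by simpa using hτ⟩
  | succ j ih =>
    obtain ⟨s, hs, hnd, hτl, hlz⟩ := ih (by omega)
    set l := s.foldl (extend verts) [τ]
    have hlen : l.length = j + 1 := by rw [length_foldl_extend, hs, List.length_singleton, add_comm]
    have hcard : #l.toFinset = j + 1 := by rw [List.toFinset_card_of_nodup hnd, hlen]
    obtain ⟨a, ha, b, hb, hbl, e, he, hea, heb⟩ := hirr.exists_shared_edge hz
      (fun f hf => hlz f (List.mem_toFinset.1 hf)) ⟨τ, List.mem_toFinset.2 hτl⟩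
      (fun h => by rw [h] at hcard; omega)
    obtain ⟨st, hst⟩ := exists_extend_eq (k := #z) (List.mem_toFinset.1 ha) (by omega) hm
      (h3 a (hlz a (List.mem_toFinset.1 ha))) (h3 b hb) he hea heb
      fun u hu => hverts u (mem_vertices.2 ⟨b, hb, hu⟩)
    refine ⟨s ++ [st], by simp [hs], ?_⟩
    rw [List.foldl_append, List.foldl_cons, List.foldl_nil, hst]
    rw [List.mem_toFinset] at hbl
    refine ⟨List.nodup_append.2 ⟨hnd, List.nodup_singleton b, ?_⟩, List.mem_append_left _ hτl,
      fun f hf => ?_⟩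
    · simp only [List.mem_singleton]
      rintro f hf g rfl rfl
      exact hbl hf
    · rcases List.mem_append.1 hf with hf | hf
      · exact hlz f hf
      · rw [List.mem_singleton.1 hf]
        exact hb

theorem exists_decode_eq (hz : IsCycle z) (hirr : IsIrreducible z) (h3 : ∀ f ∈ z, #f = 3)
    (hτ : τ ∈ z) (hV : #(vertices z) ≤ maxVertices #z) : ∃ c : Code α #z, decode τ c = z := by
  have hτV : τ ⊆ vertices z := fun v hv => mem_vertices.2 ⟨τ, hτ, hv⟩
  have hτ3 := h3 τ hτ
  have hVτ : #(vertices z \ τ) ≤ maxVertices #z - 3 := by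
    rw [card_sdiff_of_subset hτV]
    omega
  set L : Fin (maxVertices #z - 3) → α := fun i => (vertices z \ τ).toList.getD i default
  have hverts : ∀ u ∈ vertices z, u ∈ vertexList τ L := by
    intro u hu
    by_cases huτ : u ∈ τ
    · exact List.mem_append_left _ (mem_toList.2 huτ)
    · obtain ⟨i, hi, hiu⟩ := List.mem_iff_getElem.1 (mem_toList.2 (mem_sdiff.2 ⟨hu, huτ⟩))
      refine List.mem_append_right _ (List.mem_ofFn.2 ⟨⟨i, by rw [length_toList] at hi; omega⟩, ?_⟩)
      exact (List.getD_eq_getElem _ _ hi).trans hiu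
  have hlen : (vertexList τ L).length ≤ maxVertices #z := by
    have := card_le_card hτV
    simp only [vertexList, List.length_append, length_toList, List.length_ofFn]
    omega
  obtain ⟨s, hs, hnd, -, hsub⟩ := exists_foldl_extend hz hirr h3 hτ hlen hverts (#z - 1)
    (by have := card_pos.2 ⟨τ, hτ⟩; omega)
  refine ⟨(L, ⟨s, hs⟩), eq_of_subset_of_card_le (fun f hf => hsub f (List.mem_toFinset.1 hf)) ?_⟩
  have := card_pos.2 ⟨τ, hτ⟩
  change #z ≤ #(s.foldl (extend (vertexList τ L)) [τ]).toFinset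
  rw [List.toFinset_card_of_nodup hnd, length_foldl_extend, hs, List.length_singleton]
  omega

end Encoding

section SmallFillings

variable {n : ℕ} {p : ℝ}

def HasSmallFilling (Y : Finset (Finset (Fin n))) (τ : Finset (Fin n)) (K : ℕ) : Prop :=
  ∃ y ⊆ Y, IsFilling y τ ∧ #y < K

theorem IsFilling.nonempty {y : Finset (Finset (Fin n))} {τ : Finset (Fin n)} (h : IsFilling y τ)
    (hτ : #τ = 3) : y.Nonempty := by
  obtain ⟨e, he, he2⟩ := exists_subset_card_eq (show 2 ≤ #τ by omega)
  have := h.2 e he2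
  rw [if_pos he] at this
  obtain ⟨f, hf⟩ := card_pos.1 (show 0 < #{f ∈ y | e ⊆ f} by omega)
  exact ⟨f, (mem_filter.1 hf).1⟩

theorem HasSmallFilling.exists_minimal {Y : Finset (Finset (Fin n))} {τ : Finset (Fin n)}
    {K : ℕ} (h : HasSmallFilling Y τ K) :
    ∃ y ⊆ Y, IsFilling y τ ∧ #y < K ∧ ∀ y' ⊆ y, IsFilling y' τ → #y ≤ #y' := by
  classical
  obtain ⟨y₀, hy₀Y, hy₀, hy₀K⟩ := h
  have hy₀F : y₀ ∈ {y ∈ Y.powerset | IsFilling y τ} := mem_filter.2 ⟨mem_powerset.2 hy₀Y, hy₀⟩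
  obtain ⟨y, hyF, hmin⟩ := exists_min_image _ card ⟨y₀, hy₀F⟩
  obtain ⟨hyY, hfill⟩ := mem_filter.1 hyF
  rw [mem_powerset] at hyY
  exact ⟨y, hyY, hfill, (hmin y₀ hy₀F).trans_lt hy₀K, fun y' hy' hf =>
    hmin y' (mem_filter.2 ⟨mem_powerset.2 (hy'.trans hyY), hf⟩)⟩

theorem exists_decode_of_hasSmallFilling [NeZero n] {Y : Finset (Finset (Fin n))}
    {τ : Finset (Fin n)} {K : ℕ} (hτ3 : #τ = 3) (hτY : τ ∉ Y) (h : HasSmallFilling Y τ K) :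
    ∃ j ∈ Ico 1 K, ∃ c : Code (Fin n) (j + 1),
      (decode τ c).erase τ ⊆ Y ∧ #((decode τ c).erase τ) = j := by
  obtain ⟨y, hyY, hfill, hyK, hymin⟩ := h.exists_minimal
  have hy₁ : 1 ≤ #y := card_pos.2 (IsFilling.nonempty hfill hτ3)
  have hτy : τ ∉ y := fun h => hτY (hyY h)
  have hz := IsFilling.isCycle_insert hfill hτy
  have hirr := isIrreducible_insert_of_minimal hτy hfill hymin
  have h3 : ∀ f ∈ insert τ y, #f = 3 := forall_mem_insert _ _ _ |>.2 ⟨hτ3, hfill.1⟩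
  have hV := two_mul_card_vertices_le hz hirr h3
  have hdecode := exists_decode_eq hz hirr h3 (mem_insert_self τ y)
    (by unfold maxVertices; omega)
  rw [card_insert_of_notMem hτy] at hdecode
  obtain ⟨c, hc⟩ := hdecode
  have hcy : (decode τ c).erase τ = y := by rw [hc, erase_insert hτy]
  exact ⟨#y, mem_Ico.2 ⟨hy₁, hyK⟩, c, hcy.symm ▸ hyY, by rw [hcy]⟩

theorem card_code_mul_pow_le (hn : 1 ≤ n) (hp : 0 ≤ p) {j K : ℕ} (hj : 1 ≤ j) (hjK : j + 1 ≤ K) :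
    (Fintype.card (Code (Fin n) (j + 1)) : ℝ) * p ^ j * √n ≤ (6 * K ^ 2 * √n * p) ^ j := by
  have hsqrt : 1 ≤ √(n : ℝ) := Real.one_le_sqrt.2 (by exact_mod_cast hn)
  have hcard : Fintype.card (Code (Fin n) (j + 1))
      = n ^ (maxVertices (j + 1) - 3) * ((j + 1) * (3 * maxVertices (j + 1))) ^ j := by
    simp [Code, card_vector]
  have hfaces : ((j + 1) * (3 * maxVertices (j + 1)) : ℝ) ≤ 6 * K ^ 2 := by
    have : (j + 1) * (3 * maxVertices (j + 1)) ≤ 6 * K ^ 2 := by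
      unfold maxVertices
      nlinarith [Nat.div_mul_le_self (j + 1 + 4) 2]
    exact_mod_cast this
  have hvertices : (n : ℝ) ^ (maxVertices (j + 1) - 3) * √n ≤ √n ^ j := by
    calc (n : ℝ) ^ (maxVertices (j + 1) - 3) * √n = √n ^ (2 * (maxVertices (j + 1) - 3) + 1) := by
          rw [pow_succ, pow_mul, Real.sq_sqrt (Nat.cast_nonneg n)]
      _ ≤ √n ^ j := pow_le_pow_right₀ hsqrt (by unfold maxVertices; omega)
  calc (Fintype.card (Code (Fin n) (j + 1)) : ℝ) * p ^ j * √n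
      = ((n : ℝ) ^ (maxVertices (j + 1) - 3) * √n) *
          (((j + 1) * (3 * maxVertices (j + 1)) : ℝ) ^ j * p ^ j) := by
        rw [hcard]; push_cast; ring
    _ ≤ √n ^ j * ((6 * K ^ 2) ^ j * p ^ j) := by
        gcongr
    _ = (6 * K ^ 2 * √n * p) ^ j := by ring

theorem sum_card_code_mul_pow_le (hn : 1 ≤ n) (hp : 0 ≤ p) {K : ℕ}
    (hr : 6 * K ^ 2 * √n * p ≤ 1 / 2) :
    ∑ j ∈ Ico 1 K, (Fintype.card (Code (Fin n) (j + 1)) : ℝ) * p ^ j ≤ 12 * K ^ 2 * p := by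
  have hsqrt : 0 < √(n : ℝ) := Real.sqrt_pos.2 (by exact_mod_cast hn)
  set r := 6 * K ^ 2 * √n * p
  have hr₀ : 0 ≤ r := by positivity
  calc ∑ j ∈ Ico 1 K, (Fintype.card (Code (Fin n) (j + 1)) : ℝ) * p ^ j
      ≤ ∑ j ∈ Ico 1 K, r ^ j / √n := sum_le_sum fun j hj => by
        rw [le_div_iff₀ hsqrt]
        exact card_code_mul_pow_le hn hp (mem_Ico.1 hj).1 (Nat.succ_le_of_lt (mem_Ico.1 hj).2)
    _ ≤ r / (1 - r) / √n := by
        rw [← sum_div]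
        gcongr
        simpa using geom_sum_Ico_le_of_lt_one (m := 1) (n := K) hr₀ (by linarith)
    _ ≤ 2 * r / √n := by
        gcongr
        rw [div_le_iff₀ (by linarith)]
        nlinarith
    _ = 12 * K ^ 2 * p := by field_simp; ring

/-- Union bound over `τ ∈ Y` and over the codes of the irreducible cycles `insert τ y`. -/
theorem LMprob_hasSmallFilling_le (hp₀ : 0 ≤ p) (hp₁ : p ≤ 1) {τ : Finset (Fin n)}
    (hτ : τ ∈ triangles n) {K : ℕ} (hr : 6 * K ^ 2 * √n * p ≤ 1 / 2) :
    LMprob n p {Y | HasSmallFilling Y τ K} ≤ p * (1 + 12 * K ^ 2) := by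
  have hτ3 : #τ = 3 := (mem_filter.1 hτ).2
  obtain ⟨v, -⟩ := card_pos.1 (show 0 < #τ by omega)
  have : NeZero n := ⟨(Fin.pos v).ne'⟩
  set E : (Σ j, Code (Fin n) (j + 1)) → Set (Finset (Finset (Fin n))) := fun c =>
    {Y | (decode τ c.2).erase τ ⊆ Y ∧ #((decode τ c.2).erase τ) = c.1}
  have hcover : {Y | HasSmallFilling Y τ K}
      ⊆ {Y | {τ} ⊆ Y} ∪ ⋃ c ∈ (Ico 1 K).sigma fun _ => univ, E c := by
    intro Y hY
    by_cases hτY : τ ∈ Y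
    · exact Or.inl (singleton_subset_iff.2 hτY)
    · obtain ⟨j, hj, c, hc⟩ := exists_decode_of_hasSmallFilling hτ3 hτY hY
      exact Or.inr (Set.mem_iUnion₂.2 ⟨⟨j, c⟩, mem_sigma.2 ⟨hj, mem_univ _⟩, hc⟩)
  have hE : ∀ c, LMprob n p (E c) ≤ p ^ c.1 := fun c => by
    by_cases hc : #((decode τ c.2).erase τ) = c.1
    · rw [← hc]
      exact (LMprob_mono hp₀ hp₁ fun Y hY => hY.1).trans (LMprob_superset_le hp₀ _)
    · simp only [E, hc, and_false, Set.ofPred_false]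
      simpa [LMprob] using pow_nonneg hp₀ _
  calc LMprob n p {Y | HasSmallFilling Y τ K}
      ≤ p ^ #{τ} + ∑ c ∈ (Ico 1 K).sigma fun _ => univ, p ^ c.1 :=
        (LMprob_le_add hp₀ hp₁ hcover).trans (add_le_add (LMprob_superset_le hp₀ _)
          ((LMprob_le_sum hp₀ hp₁ subset_rfl).trans (sum_le_sum fun c _ => hE c)))
    _ = p + ∑ j ∈ Ico 1 K, Fintype.card (Code (Fin n) (j + 1)) * p ^ j := by
        rw [card_singleton, pow_one, sum_sigma]
        simp
    _ ≤ p + 12 * K ^ 2 * p := by gcongr; exact sum_card_code_mul_pow_le (Fin.pos v) hp₀ hr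
    _ = p * (1 + 12 * K ^ 2) := by ring

end SmallFillings

section Counting

variable {n : ℕ} {p α : ℝ}

theorem TY_eq_of_not_hasSmallFilling {Y : Finset (Finset (Fin n))} {τ : Finset (Fin n)}
    (h : ¬ HasSmallFilling Y τ ⌈(n : ℝ) ^ α⌉₊) : TY n α Y τ = (n : ℝ) ^ α := by
  unfold TY
  split_ifs with hex
  · obtain ⟨y, hyY, hy, hcard⟩ := Nat.sInf_mem (s := {m | ∃ y ⊆ Y, IsFilling y τ ∧ #y = m})
      (let ⟨y, hyY, hy⟩ := hex; ⟨#y, y, hyY, hy, rfl⟩)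
    rw [← hcard]
    exact min_eq_left (Nat.ceil_le.1 (not_lt.1 fun hlt => h ⟨y, hyY, hy, hlt⟩))
  · rfl

open Classical in
theorem card_mul_le_sum_TY_sq (Y : Finset (Finset (Fin n))) :
    (#{τ ∈ triangles n | ¬ HasSmallFilling Y τ ⌈(n : ℝ) ^ α⌉₊} : ℝ) * ((n : ℝ) ^ α) ^ 2
      ≤ ∑ τ ∈ triangles n, TY n α Y τ ^ 2 := by
  rw [← nsmul_eq_mul, ← sum_const]
  calc ∑ τ ∈ triangles n with ¬ HasSmallFilling Y τ ⌈(n : ℝ) ^ α⌉₊, ((n : ℝ) ^ α) ^ 2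
      = ∑ τ ∈ triangles n with ¬ HasSmallFilling Y τ ⌈(n : ℝ) ^ α⌉₊, TY n α Y τ ^ 2 :=
        sum_congr rfl fun τ hτ => by rw [TY_eq_of_not_hasSmallFilling (mem_filter.1 hτ).2]
    _ ≤ ∑ τ ∈ triangles n, TY n α Y τ ^ 2 :=
        sum_le_sum_of_subset_of_nonneg (filter_subset _ _) fun _ _ _ => sq_nonneg _

theorem cube_le_card_triangles (hn : 4 ≤ n) : n ^ 3 ≤ 24 * #(triangles n) := by
  have hcard : #(triangles n) = n.choose 3 := by
    rw [show triangles n = powersetCard 3 univ by rw [powersetCard_eq_filter, powerset_univ]; rfl,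
      card_powersetCard, card_univ, Fintype.card_fin]
  obtain ⟨m, rfl⟩ : ∃ m, n = m + 4 := ⟨n - 4, by omega⟩
  have h := Nat.descFactorial_eq_factorial_mul_choose (m + 4) 3
  simp only [Nat.descFactorial, Nat.factorial] at h
  norm_num at h
  rw [show m + 4 - 2 = m + 2 by omega] at h
  rw [hcard]
  nlinarith

open Classical in
theorem le_sum_TY_sq_of_card_le (hn : 4 ≤ n) {Y : Finset (Finset (Fin n))}
    (h : #(triangles n) ≤ 2 * #{τ ∈ triangles n | ¬ HasSmallFilling Y τ ⌈(n : ℝ) ^ α⌉₊}) :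
    1 / 48 * (n : ℝ) ^ ((3 : ℝ) + 2 * α) ≤ ∑ τ ∈ triangles n, TY n α Y τ ^ 2 := by
  have hn₀ : (0 : ℝ) < n := by exact_mod_cast (show 0 < n by omega)
  have hcube : (n : ℝ) ^ 3 ≤ 24 * #(triangles n) := by exact_mod_cast cube_le_card_triangles hn
  have hhalf : (#(triangles n) : ℝ)
      ≤ 2 * #{τ ∈ triangles n | ¬ HasSmallFilling Y τ ⌈(n : ℝ) ^ α⌉₊} := by
    exact_mod_cast h
  calc 1 / 48 * (n : ℝ) ^ ((3 : ℝ) + 2 * α) = 1 / 48 * (n : ℝ) ^ 3 * ((n : ℝ) ^ α) ^ 2 := by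
        rw [Real.rpow_add hn₀, mul_comm 2 α, Real.rpow_mul hn₀.le, Real.rpow_two, Real.rpow_ofNat,
          mul_assoc]
    _ ≤ #{τ ∈ triangles n | ¬ HasSmallFilling Y τ ⌈(n : ℝ) ^ α⌉₊} * ((n : ℝ) ^ α) ^ 2 := by
        gcongr
        linarith
    _ ≤ ∑ τ ∈ triangles n, TY n α Y τ ^ 2 := card_mul_le_sum_TY_sq Y

/-- Markov's inequality for the number of triangles with a small filling. -/
theorem one_sub_two_mul_le_LMprob (hn : 4 ≤ n) (hp₀ : 0 ≤ p) (hp₁ : p ≤ 1) {q : ℝ}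
    (hq : ∀ τ ∈ triangles n, LMprob n p {Y | HasSmallFilling Y τ ⌈(n : ℝ) ^ α⌉₊} ≤ q) :
    1 - 2 * q ≤ LMprob n p
      {Y | 1 / 48 * (n : ℝ) ^ ((3 : ℝ) + 2 * α) ≤ ∑ τ ∈ triangles n, TY n α Y τ ^ 2} := by
  classical
  have hT : (triangles n).Nonempty := card_pos.1 <| by
    have := cube_le_card_triangles hn
    have : 4 ^ 3 ≤ n ^ 3 := Nat.pow_le_pow_left hn 3
    omega
  have hcover : ∀ Y, Y ∈ {Y | 1 / 48 * (n : ℝ) ^ ((3 : ℝ) + 2 * α)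
      ≤ ∑ τ ∈ triangles n, TY n α Y τ ^ 2} ∨ Y ∈ {Y | #(triangles n)
        ≤ 2 * #{τ ∈ triangles n | Y ∈ {Y | HasSmallFilling Y τ ⌈(n : ℝ) ^ α⌉₊}}} := fun Y =>
    or_iff_not_imp_right.2 fun hY => le_sum_TY_sq_of_card_le hn <| by
      have := card_filter_add_card_filter_not (s := triangles n)
        fun τ => HasSmallFilling Y τ ⌈(n : ℝ) ^ α⌉₊
      simp only [Set.mem_ofPred_eq] at hY
      omega
  linarith [one_le_LMprob_add hp₀ hp₁ hcover, LMprob_two_mul_card_filter_ge_le hp₀ hp₁ hT hq]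

end Counting

section Asymptotics

open Filter Topology

theorem tendsto_natCast_rpow_nhds_zero {β : ℝ} (hβ : β < 0) :
    Tendsto (fun n : ℕ => (n : ℝ) ^ β) atTop (𝓝 0) := by
  simpa [Function.comp_def] using
    (tendsto_rpow_neg_atTop (neg_pos.2 hβ)).comp tendsto_natCast_atTop_atTop

theorem tendsto_ceil_rpow_sq_mul_rpow {α β : ℝ} (hα : 0 ≤ α) (h : 2 * α + β < 0) :
    Tendsto (fun n : ℕ => (⌈(n : ℝ) ^ α⌉₊ : ℝ) ^ 2 * (n : ℝ) ^ β) atTop (𝓝 0) := by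
  refine squeeze_zero' (Eventually.of_forall fun n => by positivity) ?_
    (by simpa using (tendsto_natCast_rpow_nhds_zero h).const_mul 4)
  filter_upwards [eventually_ge_atTop 1] with n hn
  have hn₀ : (0 : ℝ) < n := by exact_mod_cast hn
  have hceil : (⌈(n : ℝ) ^ α⌉₊ : ℝ) ≤ 2 * (n : ℝ) ^ α := by
    have := Nat.ceil_lt_add_one (Real.rpow_nonneg hn₀.le α)
    have := Real.one_le_rpow (show (1 : ℝ) ≤ n by exact_mod_cast hn) hα
    linarith
  calc (⌈(n : ℝ) ^ α⌉₊ : ℝ) ^ 2 * (n : ℝ) ^ β ≤ (2 * (n : ℝ) ^ α) ^ 2 * (n : ℝ) ^ β := by gcongr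
    _ = 4 * (n : ℝ) ^ (2 * α + β) := by
        rw [Real.rpow_add hn₀, mul_comm 2 α, Real.rpow_mul hn₀.le, Real.rpow_two]
        ring

end Asymptotics

end LinialMeshulam

open LinialMeshulam Filter Topology in
theorem stmt9_general (ε α : ℝ) (hα : 0 < α) (hsmall : 2 * α + ε < 1 / 2) :
    ∃ c : ℝ, 0 < c ∧
      Filter.Tendsto
        (fun n : ℕ => LMprob n ((n : ℝ) ^ (ε - 1))
          {Y | c * (n : ℝ) ^ ((3 : ℝ) + 2 * α) ≤ ∑ τ ∈ triangles n, TY n α Y τ ^ 2})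
        Filter.atTop (nhds 1) := by
  refine ⟨1 / 48, by norm_num, ?_⟩
  have hp : ∀ n : ℕ, 1 ≤ n → 0 ≤ (n : ℝ) ^ (ε - 1) ∧ (n : ℝ) ^ (ε - 1) ≤ 1 := fun n hn =>
    ⟨Real.rpow_nonneg n.cast_nonneg _,
      Real.rpow_le_one_of_one_le_of_nonpos (by exact_mod_cast hn) (by linarith)⟩
  have hq : Tendsto (fun n : ℕ => 1 - 2 * ((n : ℝ) ^ (ε - 1) * (1 + 12 * ⌈(n : ℝ) ^ α⌉₊ ^ 2)))
      atTop (𝓝 1) := by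
    have := ((tendsto_natCast_rpow_nhds_zero (β := ε - 1) (by linarith)).add
      ((tendsto_ceil_rpow_sq_mul_rpow hα.le (β := ε - 1) (by linarith)).const_mul 12)).const_mul 2
    simpa [mul_add, mul_comm, mul_left_comm, mul_assoc] using this.const_sub 1
  have hr : ∀ᶠ n : ℕ in atTop, 6 * ⌈(n : ℝ) ^ α⌉₊ ^ 2 * √n * (n : ℝ) ^ (ε - 1) ≤ 1 / 2 := by
    filter_upwards [(tendsto_ceil_rpow_sq_mul_rpow hα.le (β := ε - 1 / 2) (by linarith)).eventually
      (ge_mem_nhds (show (0 : ℝ) < 1 / 12 by norm_num)), eventually_ge_atTop 1] with n hn hn₁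
    have hn₀ : (0 : ℝ) < n := by exact_mod_cast hn₁
    rw [Real.sqrt_eq_rpow, mul_assoc, ← Real.rpow_add hn₀, show 1 / 2 + (ε - 1) = ε - 1 / 2 by ring]
    linarith
  refine tendsto_of_tendsto_of_tendsto_of_le_of_le' hq tendsto_const_nhds ?_ ?_
  · filter_upwards [eventually_ge_atTop 4, hr] with n hn hrn
    exact one_sub_two_mul_le_LMprob hn (hp n (by omega)).1 (hp n (by omega)).2 fun τ hτ =>
      LMprob_hasSmallFilling_le (hp n (by omega)).1 (hp n (by omega)).2 hτ hrn
  · filter_upwards [eventually_ge_atTop 1] with n hn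
    exact LMprob_le_one (hp n hn).1 (hp n hn).2 _

theorem stmt9 (ε α : ℝ) (hε : 0 < ε) (hα : 0 < α) (hsmall : 2 * α + ε < 1 / 2) :
    ∃ c : ℝ, 0 < c ∧
      Filter.Tendsto
        (fun n : ℕ => LMprob n ((n : ℝ) ^ (ε - 1))
          {Y | c * (n : ℝ) ^ ((3 : ℝ) + 2 * α) ≤ ∑ τ ∈ triangles n, TY n α Y τ ^ 2})
        Filter.atTop (nhds 1) :=
  stmt9_general ε α hα hsmall
end

section
/- Let Ω be a finite set equipped with a probability mass function P (nonnegative weights summing to 1), let T be a nonempty finite set with N = |T|, let M > 0, and let F : Ω × T → ℝ be nonnegative. If Σ_{ω∈Ω} P(ω) · Σ_{τ∈T} min(F(ω,τ), M) ≥ (99/100)·N·M, then the P-probability of the set of ω ∈ Ω such that #{τ ∈ T : F(ω,τ) ≥ M/99} ≥ N/100 is at least 96/100. -/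
/-!
Write `g ω = ∑ τ, min (F (ω, τ)) M`. Always `g ω ≤ N M`, while for a "bad" `ω` (fewer than `N / 100`
indices with `F (ω, τ) ≥ M / 99`) the large terms contribute at most `(N / 100) M` and the small
ones at most `N (M / 99)`. Hence the mean of `g` is at most `p N M + (1 - p) (199 / 9900) N M`, where
`p` is the probability of the good set; comparing with the lower bound `(99 / 100) N M` forces
`p ≥ 9602 / 9701 > 96 / 100`.
-/

open Finset
open scoped Classical

theorem Finset.sum_min_le_card_filter_mul_add_card_mul {ι : Type*} (s : Finset ι) (f : ι → ℝ)
    {M t : ℝ} (ht : 0 ≤ t) :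
    ∑ i ∈ s, min (f i) M ≤ #(s.filter (fun i => t ≤ f i)) * M + #s * t :=
  calc ∑ i ∈ s, min (f i) M ≤ ∑ i ∈ s, if t ≤ f i then M else t :=
        sum_le_sum fun i _ => by
          split_ifs with hi
          · exact min_le_right _ _
          · exact (min_le_left _ _).trans (not_le.1 hi).le
    _ = #(s.filter (fun i => t ≤ f i)) * M + #(s.filter (fun i => ¬ t ≤ f i)) * t := by
        simp only [sum_ite, sum_const, nsmul_eq_mul]
    _ ≤ #(s.filter (fun i => t ≤ f i)) * M + #s * t := by
        gcongr
        exact filter_subset _ _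

theorem Finset.sum_mul_le_sum_filter_mul_add_sum_filter_not_mul {ι : Type*} (s : Finset ι) (p : ι → Prop)
    [DecidablePred p] {w g : ι → ℝ} {B b : ℝ} (hw : ∀ i ∈ s, 0 ≤ w i)
    (hB : ∀ i ∈ s, g i ≤ B) (hb : ∀ i ∈ s, ¬ p i → g i ≤ b) :
    ∑ i ∈ s, w i * g i ≤ (∑ i ∈ s with p i, w i) * B + (∑ i ∈ s with ¬ p i, w i) * b := by
  rw [← sum_filter_add_sum_filter_not s p, sum_mul, sum_mul]
  refine add_le_add (sum_le_sum fun i hi => ?_) (sum_le_sum fun i hi => ?_) <;>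
    obtain ⟨hs, hpi⟩ := mem_filter.1 hi
  · exact mul_le_mul_of_nonneg_left (hB i hs) (hw i hs)
  · exact mul_le_mul_of_nonneg_left (hb i hs hpi) (hw i hs)

theorem stmt10_general {Ω T : Type*} [Fintype Ω] [Fintype T] [Nonempty T]
    (P : Ω → ℝ) (hP : ∀ ω, 0 ≤ P ω) (hPsum : ∑ ω, P ω = 1)
    (M : ℝ) (hM : 0 < M) (F : Ω × T → ℝ)
    (h : ∑ ω, P ω * ∑ τ, min (F (ω, τ)) M ≥ (99 / 100) * (Fintype.card T : ℝ) * M) :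
    ∑ ω ∈ Finset.univ.filter (fun ω : Ω =>
        ((Fintype.card T : ℝ) / 100 ≤
          ((Finset.univ.filter (fun τ : T => M / 99 ≤ F (ω, τ))).card : ℝ))),
      P ω ≥ 96 / 100 := by
  set N : ℝ := (Fintype.card T : ℝ)
  have hNM : 0 < N * M := mul_pos (Nat.cast_pos.2 Fintype.card_pos) hM
  have hsum_le : ∀ ω, ∑ τ, min (F (ω, τ)) M ≤ N * M := fun ω =>
    (sum_le_sum fun τ _ => min_le_right _ _).trans_eq (by simp [N, mul_comm])
  have hbad : ∀ ω, ¬ N / 100 ≤ #(univ.filter fun τ => M / 99 ≤ F (ω, τ)) →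
      ∑ τ, min (F (ω, τ)) M ≤ N / 100 * M + N * (M / 99) := fun ω hω =>
    (sum_min_le_card_filter_mul_add_card_mul univ _ (t := M / 99) (by positivity)).trans
      (by gcongr
          · exact (not_le.1 hω).le
          · simp [N])
  have hmean := sum_mul_le_sum_filter_mul_add_sum_filter_not_mul univ _ (fun ω _ => hP ω)
    (fun ω _ => hsum_le ω) (fun ω _ => hbad ω)
  have hsplit := sum_filter_add_sum_filter_not univ
    (fun ω => N / 100 ≤ #(univ.filter fun τ => M / 99 ≤ F (ω, τ))) P
  rw [hPsum] at hsplit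
  nlinarith

theorem stmt10 {Ω T : Type*} [Fintype Ω] [Fintype T] [Nonempty T]
    (P : Ω → ℝ) (hP : ∀ ω, 0 ≤ P ω) (hPsum : ∑ ω, P ω = 1)
    (M : ℝ) (hM : 0 < M) (F : Ω × T → ℝ) (hF : ∀ ω τ, 0 ≤ F (ω, τ))
    (h : ∑ ω, P ω * ∑ τ, min (F (ω, τ)) M ≥ (99 / 100) * (Fintype.card T : ℝ) * M) :
    ∑ ω ∈ Finset.univ.filter (fun ω : Ω =>
        ((Fintype.card T : ℝ) / 100 ≤
          ((Finset.univ.filter (fun τ : T => M / 99 ≤ F (ω, τ))).card : ℝ))),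
      P ω ≥ 96 / 100 :=
  stmt10_general P hP hPsum M hM F h
end
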